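/- arXiv:math/0603614 — 5 statements merged into one kernel-verified Lean document; each statement's English description precedes it below -/
import Mathlib

section
/- Let n ≥ 2, let I = {(i, j) : 1 ≤ i < j ≤ n + 1} and N = |I| = n(n+1)/2, and let ε = (ε_{i,j})_{(i,j)∈I} ∈ [0, 1/2]^N. Define points p₁(ε), …, p_{n+1}(ε) in ℝ^n by p₁(ε) = (−1, 0, …, 0); p_j(ε) = (ε_{1,j}, …, ε_{j−1,j}, −1, 0, …, 0) for 2 ≤ j ≤ n − 1; p_n(ε) = (ε_{1,n}, …, ε_{n−1,n}, −1); and p_{n+1}(ε) = (ε_{1,n+1}, …, ε_{n,n+1}). Then for all 1 ≤ i < j ≤ n + 1, one has ‖p_i(ε) − p_j(ε)‖_∞ = 1 + ε_{i,j}. -/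
/-- The points `p₁(ε), …, p_{n+1}(ε)` of the paper, with `0`-based indexing: for
`j : Fin (n+1)`, the `k`-th coordinate of `pPoint n ε j` is `ε_{k,j}` if `k < j`,
`-1` if `k = j`, and `0` otherwise.  (So `pPoint n ε 0 = (-1,0,…,0)`,
`pPoint n ε j = (ε_{1,j},…,ε_{j-1,j},-1,0,…,0)` for `2 ≤ j ≤ n` in `1`-based terms,
and `pPoint n ε n = (ε_{1,n+1},…,ε_{n,n+1})`.) -/
def pPoint (n : ℕ) (ε : Fin (n + 1) → Fin (n + 1) → ℝ) (j : Fin (n + 1)) : Fin n → ℝ :=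
  fun k => if (k : ℕ) < (j : ℕ) then ε k.castSucc j
    else if (k : ℕ) = (j : ℕ) then -1 else 0

/-- For `n ≥ 2` and `ε = (ε_{i,j}) ∈ [0, 1/2]^{n(n+1)/2}`, the points
`p₁(ε), …, p_{n+1}(ε)` satisfy `‖p_i(ε) - p_j(ε)‖_∞ = 1 + ε_{i,j}` for all `i < j`.
(Here `‖·‖` is the sup norm on `Fin n → ℝ`.) -/
theorem linf_dist_pPoint (n : ℕ) (hn : 2 ≤ n) (ε : Fin (n + 1) → Fin (n + 1) → ℝ)
    (hε : ∀ i j : Fin (n + 1), i < j → ε i j ∈ Set.Icc (0 : ℝ) (1 / 2)) :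
    ∀ i j : Fin (n + 1), i < j →
      ‖pPoint n ε i - pPoint n ε j‖ = 1 + ε i j := by
  intro i j hij
  have hij' : (i : ℕ) < (j : ℕ) := hij
  have hj : (j : ℕ) ≤ n := Nat.lt_succ_iff.mp j.isLt
  have hin : (i : ℕ) < n := lt_of_lt_of_le hij' hj
  obtain ⟨hε0, _⟩ := hε i j hij
  apply le_antisymm
  · refine (pi_norm_le_iff_of_nonneg (by linarith)).mpr ?_
    intro k
    simp only [Pi.sub_apply, pPoint, Real.norm_eq_abs]
    rcases lt_trichotomy (k : ℕ) (i : ℕ) with hk | hk | hk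
    · have hkj : (k : ℕ) < (j : ℕ) := hk.trans hij'
      rw [if_pos hk, if_pos hkj]
      obtain ⟨h1, h2⟩ := hε k.castSucc i (by simpa [Fin.lt_def] using hk)
      obtain ⟨h3, h4⟩ := hε k.castSucc j (by simpa [Fin.lt_def] using hkj)
      rw [abs_le]; constructor <;> linarith
    · have hki : ¬ (k : ℕ) < (i : ℕ) := by omega
      have hkj : (k : ℕ) < (j : ℕ) := by omega
      rw [if_neg hki, if_pos hk, if_pos hkj]
      have hc : k.castSucc = i := by ext; exact hk
      rw [hc, abs_le]; constructor <;> linarith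
    · have hki : ¬ (k : ℕ) < (i : ℕ) := by omega
      have hki' : ¬ (k : ℕ) = (i : ℕ) := by omega
      rw [if_neg hki, if_neg hki']
      rcases lt_trichotomy (k : ℕ) (j : ℕ) with hkj | hkj | hkj
      · rw [if_pos hkj]
        obtain ⟨h3, h4⟩ := hε k.castSucc j (by simpa [Fin.lt_def] using hkj)
        rw [abs_le]; constructor <;> linarith
      · rw [if_neg (by omega), if_pos hkj]
        rw [abs_le]; constructor <;> linarith
      · rw [if_neg (by omega), if_neg (by omega)]
        rw [abs_le]; constructor <;> linarith
  · set k₀ : Fin n := ⟨(i : ℕ), hin⟩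
    have hcast : k₀.castSucc = i := by ext; simp [k₀]
    have hval : (pPoint n ε i - pPoint n ε j) k₀ = -1 - ε i j := by
      simp only [Pi.sub_apply, pPoint]
      rw [if_neg (by simp [k₀]), if_pos (by simp [k₀]), if_pos (by simpa [k₀] using hij')]
      rw [hcast]
    calc 1 + ε i j = ‖(pPoint n ε i - pPoint n ε j) k₀‖ := by
          rw [hval, Real.norm_eq_abs, abs_of_nonpos (by linarith)]; ring
      _ ≤ _ := norm_le_pi_norm _ k₀
end

section
/- Let n ≥ 2 and let ‖·‖ be a norm on ℝ^n satisfying ‖x‖ ≤ ‖x‖_∞ ≤ (3/2)‖x‖ for all x ∈ ℝ^n. Let I = {(i, j) : 1 ≤ i < j ≤ n + 1}, N = n(n+1)/2, and for ε ∈ [0, 1/2]^N let p₁(ε), …, p_{n+1}(ε) be defined by p₁(ε) = (−1, 0, …, 0); p_j(ε) = (ε_{1,j}, …, ε_{j−1,j}, −1, 0, …, 0) for 2 ≤ j ≤ n − 1; p_n(ε) = (ε_{1,n}, …, ε_{n−1,n}, −1); p_{n+1}(ε) = (ε_{1,n+1}, …, ε_{n,n+1}). Then for every ε ∈ [0, 1/2]^N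 and every (i, j) ∈ I, the quantity φ_{i,j}(ε) := 1 + ε_{i,j} − ‖p_i(ε) − p_j(ε)‖ satisfies 0 ≤ φ_{i,j}(ε) ≤ 1/2. -/
/-- Let `n ≥ 2` and let `ν` be a norm on `ℝⁿ` (given by its triangle inequality and
absolute homogeneity) with `ν x ≤ ‖x‖_∞ ≤ (3/2) ν x` for all `x` (`‖·‖` being the sup
norm on `Fin n → ℝ`).  Then for every `ε ∈ [0,1/2]^{n(n+1)/2}` and every pair `i < j`,
the quantity `φ_{i,j}(ε) = 1 + ε_{i,j} - ν (p_i(ε) - p_j(ε))` lies in `[0, 1/2]`. -/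
theorem phi_mem_Icc (n : ℕ) (hn : 2 ≤ n) (ν : (Fin n → ℝ) → ℝ)
    (hν_add : ∀ x y : Fin n → ℝ, ν (x + y) ≤ ν x + ν y)
    (hν_smul : ∀ (a : ℝ) (x : Fin n → ℝ), ν (a • x) = |a| * ν x)
    (h_le : ∀ x : Fin n → ℝ, ν x ≤ ‖x‖)
    (h_ge : ∀ x : Fin n → ℝ, ‖x‖ ≤ (3 / 2) * ν x)
    (ε : Fin (n + 1) → Fin (n + 1) → ℝ)
    (hε : ∀ i j : Fin (n + 1), i < j → ε i j ∈ Set.Icc (0 : ℝ) (1 / 2)) :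
    ∀ i j : Fin (n + 1), i < j →
      0 ≤ 1 + ε i j - ν (pPoint n ε i - pPoint n ε j) ∧
      1 + ε i j - ν (pPoint n ε i - pPoint n ε j) ≤ 1 / 2 := by
  intro i j hij
  obtain ⟨hε0, hε2⟩ := hε i j hij
  have hij' : (i : ℕ) < (j : ℕ) := hij
  have hjn : (j : ℕ) ≤ n := Nat.lt_succ_iff.mp j.isLt
  have hin : (i : ℕ) < n := lt_of_lt_of_le hij' hjn
  set d := pPoint n ε i - pPoint n ε j with hd
  have hval : ∀ k : Fin n, d k =
      (if (k : ℕ) < (i : ℕ) then ε k.castSucc i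
        else if (k : ℕ) = (i : ℕ) then -1 else 0) -
      (if (k : ℕ) < (j : ℕ) then ε k.castSucc j
        else if (k : ℕ) = (j : ℕ) then -1 else 0) := by
    intro k; rfl
  have hnorm : ‖d‖ = 1 + ε i j := by
    apply le_antisymm
    · rw [pi_norm_le_iff_of_nonneg (by linarith)]
      intro k
      rw [Real.norm_eq_abs, hval k]
      rcases lt_trichotomy (k : ℕ) (i : ℕ) with hk | hk | hk
      · have hkj : (k : ℕ) < (j : ℕ) := hk.trans hij'
        obtain ⟨h1, h2⟩ := hε k.castSucc i (by simpa [Fin.lt_def] using hk)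
        obtain ⟨h3, h4⟩ := hε k.castSucc j (by simpa [Fin.lt_def] using hkj)
        rw [if_pos hk, if_pos hkj]
        rw [abs_le]; constructor <;> linarith
      · have hkj : (k : ℕ) < (j : ℕ) := hk ▸ hij'
        have hki : ¬ (k : ℕ) < (i : ℕ) := by omega
        have hic : (k.castSucc : Fin (n+1)) = i := by
          apply Fin.ext; simpa using hk
        rw [if_neg hki, if_pos hk, if_pos hkj, hic]
        rw [abs_le]; constructor <;> linarith
      · have hki : ¬ (k : ℕ) < (i : ℕ) := by omega
        have hki' : ¬ (k : ℕ) = (i : ℕ) := by omega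
        rw [if_neg hki, if_neg hki']
        rcases lt_trichotomy (k : ℕ) (j : ℕ) with hkj | hkj | hkj
        · obtain ⟨h3, h4⟩ := hε k.castSucc j (by simpa [Fin.lt_def] using hkj)
          rw [if_pos hkj]
          rw [abs_le]; constructor <;> linarith
        · rw [if_neg (by omega), if_pos hkj]
          rw [abs_le]; constructor <;> linarith
        · rw [if_neg (by omega), if_neg (by omega)]
          simp; linarith
    · have hle := norm_le_pi_norm d ⟨(i : ℕ), hin⟩
      have hic : ((⟨(i : ℕ), hin⟩ : Fin n).castSucc : Fin (n+1)) = i := by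
        apply Fin.ext; simp
      rw [hval ⟨(i : ℕ), hin⟩] at hle
      rw [if_neg (by simp), if_pos (by simp), if_pos (by simpa using hij'), hic] at hle
      rw [Real.norm_eq_abs] at hle
      have : |(-1 : ℝ) - ε i j| = 1 + ε i j := by
        rw [abs_of_nonpos (by linarith)]; ring
      linarith [this ▸ hle]
  have h1 := h_le d
  have h2 := h_ge d
  rw [hnorm] at h1 h2
  constructor <;> [linarith; linarith]
end

section
/- Let n > 2, p ∈ (1, ∞), R ≥ 1, and suppose β, γ > 0 satisfy (γ + β)^p + γ^p ≥ R^p and (n − 2)·β^p + 2·γ^p ≤ 1. Let ‖·‖ be a norm on ℝ^n satisfying ‖x‖ ≤ ‖x‖_p ≤ R‖x‖ for all x ∈ ℝ^n. Then there exist n points q₁, …, q_n in ℝ^n such that ‖q_i − q_j‖ = 1 for all 1 ≤ i < j ≤ n. -/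
open Finset Filter Topology

attribute [local instance] Classical.propDecidable

/- ———————————————————————————————————————————————————————————————
   Auxiliary development: a cubical Sperner lemma (Kuhn) proved by a
   door-counting parity argument on the Freudenthal triangulation, and the
   Poincaré–Miranda theorem derived from it.
   ——————————————————————————————————————————————————————————————— -/

namespace PMSperner



def vert {d m : ℕ} (x : Fin d → Fin m) (π : Equiv.Perm (Fin d)) (k : Fin (d + 1)) :
    Fin d → ℕ :=
  fun i => (x i : ℕ) + if ((π.symm i : Fin d) : ℕ) < (k : ℕ) then 1 else 0

abbrev Room (d m : ℕ) := (Fin d → Fin m) × Equiv.Perm (Fin d)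

def lab {d m : ℕ} (ℓ : (Fin d → ℕ) → ℕ) (r : Room d m) (k : Fin (d + 1)) : ℕ :=
  ℓ (vert r.1 r.2 k)

def Full {d m : ℕ} (ℓ : (Fin d → ℕ) → ℕ) (r : Room d m) : Prop :=
  ∀ c ≤ d, ∃ k, lab ℓ r k = c

def Door {d m : ℕ} (ℓ : (Fin d → ℕ) → ℕ) (r : Room d m) (k : Fin (d + 1)) : Prop :=
  (∀ j, j ≠ k → lab ℓ r j < d) ∧ (∀ c < d, ∃ j, j ≠ k ∧ lab ℓ r j = c)

lemma vert_le {d m : ℕ} (x : Fin d → Fin m) (π : Equiv.Perm (Fin d)) (k : Fin (d+1))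
    (i : Fin d) : vert x π k i ≤ m := by
  unfold vert; have := (x i).isLt; split <;> omega

section ClaimA
variable {d m : ℕ} (ℓ : (Fin d → ℕ) → ℕ) (r : Room d m)

/-- helper: if there's a door at `k`, the labels restricted to the facet are a
bijection onto `{0,…,d-1}`. -/
lemma facet_inj (hk : Door ℓ r k) :
    ∀ j1 j2, j1 ≠ k → j2 ≠ k → lab ℓ r j1 = lab ℓ r j2 → j1 = j2 := by
  intro j1 j2 h1 h2 heq
  -- bijection argument
  let G : {j : Fin (d+1) // j ≠ k} → Fin d := fun j => ⟨lab ℓ r j.1, hk.1 j.1 j.2⟩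
  have hsurj : Function.Surjective G := by
    intro c
    obtain ⟨j, hj, hjc⟩ := hk.2 c c.isLt
    exact ⟨⟨j, hj⟩, by simp [G, hjc]⟩
  have hcard : Fintype.card {j : Fin (d+1) // j ≠ k} = Fintype.card (Fin d) := by
    simp [Fintype.card_subtype_compl]
  have hbij : Function.Bijective G :=
    (Fintype.bijective_iff_surjective_and_card G).2 ⟨hsurj, hcard⟩
  have : (⟨j1, h1⟩ : {j : Fin (d+1) // j ≠ k}) = ⟨j2, h2⟩ := by
    apply hbij.1
    simp only [G]
    exact Fin.ext heq
  exact congrArg Subtype.val this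

lemma doorCard_of_full (hl : ∀ k, lab ℓ r k ≤ d) (hF : Full ℓ r) :
    (univ.filter (Door ℓ r)).card = 1 := by
  -- labels form a bijection Fin (d+1) → Fin (d+1)
  let L : Fin (d+1) → Fin (d+1) := fun k => ⟨lab ℓ r k, Nat.lt_succ_of_le (hl k)⟩
  have hsurj : Function.Surjective L := by
    intro c
    obtain ⟨j, hj⟩ := hF c (Nat.lt_succ_iff.1 c.isLt)
    exact ⟨j, by simp [L, hj]⟩
  have hbij : Function.Bijective L :=
    (Fintype.bijective_iff_surjective_and_card L).2 ⟨hsurj, rfl⟩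
  obtain ⟨k0, hk0⟩ := hsurj (Fin.last d)
  have hk0' : lab ℓ r k0 = d := congrArg Fin.val hk0
  have hdoor : Door ℓ r k0 := by
    constructor
    · intro j hj
      have hne : L j ≠ Fin.last d := fun h => hj (hbij.1 (h.trans hk0.symm))
      have := hl j
      have : lab ℓ r j ≠ d := fun h => hne (Fin.ext h)
      omega
    · intro c hc
      obtain ⟨j, hj⟩ := hsurj ⟨c, hc.trans (Nat.lt_succ_self d)⟩
      refine ⟨j, ?_, congrArg Fin.val hj⟩
      intro h; subst h
      rw [hk0] at hj
      exact absurd (congrArg Fin.val hj) (by simp; omega)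
  have : univ.filter (Door ℓ r) = {k0} := by
    ext k
    simp only [mem_filter, mem_univ, true_and, mem_singleton]
    constructor
    · intro hD
      by_contra hne
      have := hD.1 k0 (fun h => hne h.symm) -- lab k0 < d
      omega
    · rintro rfl; exact hdoor
  rw [this]; rfl

lemma doorCard_even_of_not_full (hl : ∀ k, lab ℓ r k ≤ d) (hF : ¬ Full ℓ r) :
    Even (univ.filter (Door ℓ r)).card := by
  rcases eq_or_ne (univ.filter (Door ℓ r)) ∅ with h | h
  · rw [h]; exact ⟨0, rfl⟩
  obtain ⟨k, hk⟩ := nonempty_iff_ne_empty.2 h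
  rw [mem_filter] at hk
  have hk' : Door ℓ r k := hk.2
  -- lab k < d
  have hlabk : lab ℓ r k < d := by
    rcases Nat.lt_or_ge (lab ℓ r k) d with h' | h'
    · exact h'
    · exfalso
      have hkd : lab ℓ r k = d := le_antisymm (hl k) h'
      apply hF
      intro c hc
      rcases Nat.lt_or_ge c d with hc' | hc'
      · obtain ⟨j, _, hj⟩ := hk'.2 c hc'; exact ⟨j, hj⟩
      · exact ⟨k, by omega⟩
  -- find the duplicate j0
  obtain ⟨j0, hj0ne, hj0⟩ := hk'.2 (lab ℓ r k) hlabk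
  have hdoorj0 : Door ℓ r j0 := by
    constructor
    · intro j hj
      rcases eq_or_ne j k with rfl | hjk
      · exact hlabk
      · exact hk'.1 j hjk
    · intro c hc
      obtain ⟨j, hj, hjc⟩ := hk'.2 c hc
      rcases eq_or_ne j j0 with rfl | hjj0
      · exact ⟨k, fun h => hj0ne h.symm, by rw [← hjc, hj0]⟩
      · exact ⟨j, hjj0, hjc⟩
  have hset : univ.filter (Door ℓ r) = {k, j0} := by
    ext k'
    simp only [mem_filter, mem_univ, true_and, mem_insert, mem_singleton]
    constructor
    · intro hD
      by_contra hne
      push_neg at hne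
      -- both k and j0 are ≠ k', same label: contradicts facet_inj for door k'
      have := facet_inj ℓ r hD k j0 (fun h => hne.1 h.symm) (fun h => hne.2 h.symm) hj0.symm
      exact hj0ne this.symm
    · rintro (rfl | rfl)
      · exact hk'
      · exact hdoorj0
  rw [hset, card_insert_of_notMem (by simp only [mem_singleton]; exact fun h => hj0ne h.symm),
    card_singleton]
  exact even_two
end ClaimA
/-- an involution without fixed points on a finset gives even cardinality -/
lemma even_card_of_invol {α : Type*} [DecidableEq α] (s : Finset α) (f : α → α)
    (hmem : ∀ a ∈ s, f a ∈ s) (hinv : ∀ a ∈ s, f (f a) = a) (hne : ∀ a ∈ s, f a ≠ a) :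
    Even s.card := by
  revert hmem hinv hne
  induction s using Finset.strongInduction with
  | _ s ih =>
    intro hmem hinv hne
    rcases s.eq_empty_or_nonempty with rfl | ⟨a, ha⟩
    · simp
    · have hfa := hmem a ha
      have hne' := hne a ha
      have h2 : ({a, f a} : Finset α) ⊆ s := by
        intro z hz
        simp only [mem_insert, mem_singleton] at hz
        rcases hz with rfl | rfl <;> assumption
      have hc2 : ({a, f a} : Finset α).card = 2 := by
        rw [card_insert_of_notMem (by simpa using fun h => hne' h.symm), card_singleton]
      have hsub : s \ {a, f a} ⊂ s :=
        Finset.sdiff_ssubset h2 (by simp)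
      have heven : Even (s \ {a, f a}).card := by
        apply ih _ hsub
        · intro b hb
          simp only [Finset.mem_sdiff, mem_insert, mem_singleton] at hb ⊢
          obtain ⟨hbs, hbne⟩ := hb
          push_neg at hbne
          refine ⟨hmem b hbs, fun h => ?_⟩
          rcases h with h | h
          · exact hbne.2 (by rw [← hinv b hbs, h])
          · have hba : b = a := by
              have := congrArg f h
              rwa [hinv b hbs, hinv a ha] at this
            exact hbne.1 hba
        · intro b hb; exact hinv b (mem_sdiff.1 hb).1
        · intro b hb; exact hne b (mem_sdiff.1 hb).1
      have hle : 2 ≤ s.card := by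
        calc 2 = ({a, f a} : Finset α).card := hc2.symm
        _ ≤ s.card := card_le_card h2
      have hcard : s.card = (s \ {a, f a}).card + 2 := by
        rw [Finset.card_sdiff_of_subset h2, hc2]
        omega
      rw [hcard]
      exact heven.add even_two

section Pivots
variable {d m : ℕ}

/-- swapping two adjacent transitions only moves the vertex between them -/
lemma vert_swap (x : Fin d → Fin m) (π : Equiv.Perm (Fin d)) (a b : Fin d)
    (hab : (a : ℕ) + 1 = (b : ℕ)) (j : Fin (d+1)) (hj : (j : ℕ) ≠ (b : ℕ)) :
    vert x (π * Equiv.swap a b) j = vert x π j := by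
  funext i
  unfold vert
  congr 1
  have hsymm : (π * Equiv.swap a b).symm i = Equiv.swap a b (π.symm i) := by
    simp [Equiv.Perm.mul_def, Equiv.symm_trans_apply, Equiv.symm_swap]
  rw [hsymm]
  set u := π.symm i with hu
  rcases eq_or_ne u a with hua | hua
  · rw [hua, Equiv.swap_apply_left]
    congr 1
    rw [← hua]
    simp only [eq_iff_iff]
    rw [hua]
    omega
  · rcases eq_or_ne u b with hub | hub
    · rw [hub, Equiv.swap_apply_right]
      congr 1
      rw [← hub]
      simp only [eq_iff_iff]
      rw [hub]
      omega
    · rw [Equiv.swap_apply_of_ne_of_ne hua hub]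

/-- rotating the permutation and moving the base: facet identification.
`x' = x + e_{π 0}`. -/
lemma vert_rot (x x' : Fin (d+1) → Fin m) (π : Equiv.Perm (Fin (d+1)))
    (hx' : ∀ i, (x' i : ℕ) = (x i : ℕ) + if i = π 0 then 1 else 0)
    (j : Fin (d+1)) :
    vert x' (π * finRotate (d+1)) j.castSucc = vert x π j.succ := by
  funext i
  unfold vert
  have hsymm : (π * finRotate (d+1)).symm i = (finRotate (d+1)).symm (π.symm i) := by
    simp [Equiv.Perm.mul_def, Equiv.symm_trans_apply]
  rw [hsymm, hx' i]
  set u := π.symm i with hu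
  have hiu : i = π u := by rw [hu]; simp
  have hjc : ((j.castSucc : Fin (d+2)) : ℕ) = (j : ℕ) := rfl
  have hjs : ((j.succ : Fin (d+2)) : ℕ) = (j : ℕ) + 1 := rfl
  rcases eq_or_ne u 0 with hu0 | hu0
  · have h2 : (i = π 0) := by rw [hiu, hu0]
    have h1 : ((finRotate (d+1)).symm (0 : Fin (d+1)) : ℕ) = d := by
      have hl : (finRotate (d+1)) (Fin.last d) = 0 := finRotate_last
      rw [← hl, Equiv.symm_apply_apply]
      simp
    rw [hu0]
    simp only [if_pos h2, h1, hjc, hjs]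
    have hnlt : ¬ (d < (j:ℕ)) := by have := j.isLt; omega
    rw [if_neg hnlt, if_pos (show ((0:Fin (d+1)):ℕ) < (j:ℕ)+1 by simp)]
  · have h2 : i ≠ π 0 := by
      intro h; exact hu0 (by rw [hu, h]; simp)
    have h1 : ((finRotate (d+1)).symm u : ℕ) = (u : ℕ) - 1 := by
      have hr : (finRotate (d+1)).symm u = u - 1 := by
        apply (finRotate (d+1)).injective
        rw [Equiv.apply_symm_apply, finRotate_succ_apply, sub_add_cancel]
      rw [hr, Fin.coe_sub_one, if_neg hu0]
    simp only [if_neg h2, h1, hjc, hjs]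
    have hu0' : (u : ℕ) ≠ 0 := fun h => hu0 (Fin.ext h)
    by_cases hlt : ((u:ℕ) - 1) < (j:ℕ)
    · rw [if_pos hlt, if_pos (by omega)]
    · rw [if_neg hlt, if_neg (by omega)]
end Pivots
section Partner
variable {e m : ℕ}

/-- the pivot (partner) map on simplex-facet instances. -/
def partner (p : Room (e+1) m × Fin (e+2)) : Room (e+1) m × Fin (e+2) :=
  let x := p.1.1
  let π := p.1.2
  let k := p.2
  if hk0 : k = 0 then
    if hx : (x (π 0) : ℕ) + 1 < m then
      ((fun i => if i = π 0 then (⟨(x (π 0) : ℕ) + 1, hx⟩ : Fin m) else x i,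
        π * finRotate (e+1)), Fin.last (e+1))
    else p
  else if hkl : k = Fin.last (e+1) then
    if hx : 0 < (x (π (Fin.last e)) : ℕ) then
      ((fun i => if i = π (Fin.last e) then
          (⟨(x (π (Fin.last e)) : ℕ) - 1,
            Nat.lt_of_le_of_lt (Nat.sub_le _ 1) (x (π (Fin.last e))).isLt⟩ : Fin m)
        else x i,
        π * (finRotate (e+1))⁻¹), 0)
    else p
  else
    ((x, π * Equiv.swap
        (⟨(k:ℕ)-1, by
          have h1 : (k:ℕ) ≠ 0 := fun h => hk0 (Fin.ext h)
          have := k.isLt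
          have h2 : (k:ℕ) ≠ e+1 := fun h => hkl (Fin.ext h)
          omega⟩ : Fin (e+1))
        (⟨(k:ℕ)-1+1, by
          have h1 : (k:ℕ) ≠ 0 := fun h => hk0 (Fin.ext h)
          have := k.isLt
          have h2 : (k:ℕ) ≠ e+1 := fun h => hkl (Fin.ext h)
          omega⟩ : Fin (e+1))), k)

lemma door_congr {d m : ℕ} (ℓ : (Fin d → ℕ) → ℕ) (r r' : Room d m) (k : Fin (d+1))
    (h : ∀ j, j ≠ k → lab ℓ r' j = lab ℓ r j) : Door ℓ r k → Door ℓ r' k :=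
  fun hD => ⟨fun j hj => h j hj ▸ hD.1 j hj,
    fun c hc => let ⟨j, hj, hc'⟩ := hD.2 c hc; ⟨j, hj, (h j hj).trans hc'⟩⟩

lemma door_rot_fwd (ℓ : (Fin (e+1) → ℕ) → ℕ) (r r' : Room (e+1) m)
    (h : ∀ j : Fin (e+1), lab ℓ r' j.castSucc = lab ℓ r j.succ) :
    Door ℓ r 0 → Door ℓ r' (Fin.last (e+1)) := by
  intro hD
  constructor
  · intro j hj
    obtain ⟨j', rfl⟩ := Fin.exists_castSucc_eq.2 hj
    rw [h j']
    exact hD.1 j'.succ (Fin.succ_ne_zero j')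
  · intro c hc
    obtain ⟨j, hj, hc'⟩ := hD.2 c hc
    obtain ⟨j', rfl⟩ := Fin.exists_succ_eq.2 hj
    exact ⟨j'.castSucc, (Fin.castSucc_lt_last j').ne, (h j').trans hc'⟩

lemma door_rot_bwd (ℓ : (Fin (e+1) → ℕ) → ℕ) (r r' : Room (e+1) m)
    (h : ∀ j : Fin (e+1), lab ℓ r' j.castSucc = lab ℓ r j.succ) :
    Door ℓ r' (Fin.last (e+1)) → Door ℓ r 0 := by
  intro hD
  constructor
  · intro j hj
    obtain ⟨j', rfl⟩ := Fin.exists_succ_eq.2 hj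
    rw [← h j']
    exact hD.1 j'.castSucc (Fin.castSucc_lt_last j').ne
  · intro c hc
    obtain ⟨j, hj, hc'⟩ := hD.2 c hc
    obtain ⟨j', rfl⟩ := Fin.exists_castSucc_eq.2 hj
    exact ⟨j'.succ, Fin.succ_ne_zero j', (h j').symm.trans hc'⟩


variable (ℓ : (Fin (e+1) → ℕ) → ℕ)

/-- boundary facets on a top face (`x_i = m`) are never doors: label `0` is missing. -/
lemma not_door_top
    (HB : ∀ v : Fin (e+1) → ℕ, (∀ i, v i ≤ m) → ∀ i, v i = m → 1 ≤ ℓ v ∧ ℓ v ≤ (i:ℕ)+1)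
    (x : Fin (e+1) → Fin m) (π : Equiv.Perm (Fin (e+1)))
    (h : (x (π 0) : ℕ) + 1 = m) :
    ¬ Door ℓ (x, π) (0 : Fin (e+2)) := by
  intro hD
  obtain ⟨j, hj, hlab⟩ := hD.2 0 (Nat.succ_pos e)
  have hcoord : vert x π j (π 0) = m := by
    unfold vert
    rw [Equiv.symm_apply_apply]
    have hjpos : 0 < (j : ℕ) := by
      have := Fin.pos_of_ne_zero hj
      exact this
    rw [if_pos (by simpa using hjpos)]
    omega
  have h1 := (HB (vert x π j) (fun i => vert_le x π j i) (π 0) hcoord).1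
  have h2 : lab ℓ (x, π) j = ℓ (vert x π j) := rfl
  omega

/-- boundary facets on a bottom face (`x_i = 0`) with `i` not the last coordinate
are never doors. -/
lemma not_door_bot
    (HA : ∀ v : Fin (e+1) → ℕ, (∀ i, v i ≤ m) → ∀ i, v i = 0 → ℓ v ≠ (i:ℕ)+1)
    (x : Fin (e+1) → Fin m) (π : Equiv.Perm (Fin (e+1)))
    (h0 : (x (π (Fin.last e)) : ℕ) = 0) (hne : π (Fin.last e) ≠ Fin.last e) :
    ¬ Door ℓ (x, π) (Fin.last (e+1)) := by
  intro hD
  have hi1 : (π (Fin.last e) : ℕ) < e := by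
    have h1 := (π (Fin.last e)).isLt
    have h2 : ((π (Fin.last e)) : ℕ) ≠ e := fun h => hne (Fin.ext (by simpa using h))
    omega
  obtain ⟨j, hj, hlab⟩ := hD.2 ((π (Fin.last e) : ℕ) + 1) (by omega)
  have hcoord : vert x π j (π (Fin.last e)) = 0 := by
    unfold vert
    rw [Equiv.symm_apply_apply]
    have hjle : (j : ℕ) ≤ e := by
      have h1 := j.isLt
      have h2 : (j : ℕ) ≠ e + 1 := fun h => hj (Fin.ext (by simpa using h))
      omega
    rw [if_neg (by simp only [Fin.val_last]; omega)]
    omega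
  exact HA (vert x π j) (fun i => vert_le x π j i) (π (Fin.last e)) hcoord hlab

def Bnd (p : Room (e+1) m × Fin (e+2)) : Prop :=
  p.2 = Fin.last (e+1) ∧ (p.1.1 (p.1.2 (Fin.last e)) : ℕ) = 0

lemma partner_props
    (HA : ∀ v : Fin (e+1) → ℕ, (∀ i, v i ≤ m) → ∀ i, v i = 0 → ℓ v ≠ (i:ℕ)+1)
    (HB : ∀ v : Fin (e+1) → ℕ, (∀ i, v i ≤ m) → ∀ i, v i = m → 1 ≤ ℓ v ∧ ℓ v ≤ (i:ℕ)+1)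
    (p : Room (e+1) m × Fin (e+2)) (hD : Door ℓ p.1 p.2) (hB : ¬ Bnd p) :
    Door ℓ (partner p).1 (partner p).2 ∧ ¬ Bnd (partner p) ∧
      partner (partner p) = p ∧ partner p ≠ p := by
  obtain ⟨⟨x, π⟩, k⟩ := p
  by_cases hk0 : k = 0
  · subst hk0
    -- bottom-of-chain pivot: push the base up
    have hxm : (x (π 0) : ℕ) + 1 < m := by
      rcases Nat.lt_or_ge ((x (π 0) : ℕ) + 1) m with h | h
      · exact h
      · exfalso
        have := (x (π 0)).isLt
        exact not_door_top ℓ HB x π (by omega) hD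
    have hpart : partner ((x, π), (0 : Fin (e+2))) =
        ((fun i => if i = π 0 then (⟨(x (π 0) : ℕ) + 1, hxm⟩ : Fin m) else x i,
          π * finRotate (e+1)), Fin.last (e+1)) := by
      simp only [partner]
      rw [dif_pos trivial, dif_pos hxm]
    set x' : Fin (e+1) → Fin m :=
      fun i => if i = π 0 then (⟨(x (π 0) : ℕ) + 1, hxm⟩ : Fin m) else x i with hx'def
    set π' := π * finRotate (e+1) with hπ'def
    have hπ'l : π' (Fin.last e) = π 0 := by
      rw [hπ'def]
      simp [Equiv.Perm.mul_apply, finRotate_last]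
    have hx'v : ∀ i, (x' i : ℕ) = (x i : ℕ) + if i = π 0 then 1 else 0 := by
      intro i
      by_cases h : i = π 0 <;> simp [hx'def, h]
    have hvr : ∀ j : Fin (e+1), vert x' π' j.castSucc = vert x π j.succ := by
      intro j
      rw [hπ'def]
      exact vert_rot x x' π hx'v j
    have hlabr : ∀ j : Fin (e+1),
        lab ℓ (x', π') j.castSucc = lab ℓ (x, π) j.succ := fun j => congrArg ℓ (hvr j)
    rw [hpart]
    refine ⟨?_, ?_, ?_, ?_⟩
    · exact door_rot_fwd ℓ (x, π) (x', π') hlabr hD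
    · intro hBnd
      have := hBnd.2
      simp only [hπ'l] at this
      rw [show x' (π 0) = ⟨(x (π 0) : ℕ) + 1, hxm⟩ from by simp [hx'def]] at this
      simp at this
    · -- involution
      have h0lt : 0 < (x' (π' (Fin.last e)) : ℕ) := by
        rw [hπ'l, show x' (π 0) = ⟨(x (π 0) : ℕ) + 1, hxm⟩ from by simp [hx'def]]
        simp
      have hlast0 : (Fin.last (e+1) : Fin (e+2)) ≠ 0 := Fin.last_pos.ne'
      have : partner ((x', π'), Fin.last (e+1)) =
          ((fun i => if i = π' (Fin.last e) then
              (⟨(x' (π' (Fin.last e)) : ℕ) - 1,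
                Nat.lt_of_le_of_lt (Nat.sub_le _ 1) (x' (π' (Fin.last e))).isLt⟩ : Fin m)
            else x' i,
            π' * (finRotate (e+1))⁻¹), 0) := by
        simp only [partner]
        rw [dif_neg hlast0, dif_pos trivial, dif_pos h0lt]
      rw [this]
      refine Prod.ext (Prod.ext ?_ ?_) rfl
      · funext i
        simp only
        by_cases h : i = π 0
        · rw [if_pos (by rw [hπ'l, h]), h]
          apply Fin.ext
          simp [hπ'l, hx'def]
        · rw [if_neg (by rw [hπ'l]; exact h)]
          simp [hx'def, h]
      · simp only
        rw [hπ'def, mul_inv_cancel_right]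
    · intro h
      exact Fin.last_pos.ne' (congrArg Prod.snd h)
  · by_cases hkl : k = Fin.last (e+1)
    · subst hkl
      -- top-of-chain pivot: pull the base down
      have h0lt : 0 < (x (π (Fin.last e)) : ℕ) := by
        rcases Nat.eq_zero_or_pos (x (π (Fin.last e)) : ℕ) with h | h
        · exact absurd ⟨rfl, h⟩ hB
        · exact h
      have hlast0 : (Fin.last (e+1) : Fin (e+2)) ≠ 0 := Fin.last_pos.ne'
      have hpart : partner ((x, π), Fin.last (e+1)) =
          ((fun i => if i = π (Fin.last e) then
              (⟨(x (π (Fin.last e)) : ℕ) - 1,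
                Nat.lt_of_le_of_lt (Nat.sub_le _ 1) (x (π (Fin.last e))).isLt⟩ : Fin m)
            else x i,
            π * (finRotate (e+1))⁻¹), 0) := by
        simp only [partner]
        rw [dif_neg hlast0, dif_pos trivial, dif_pos h0lt]
      set x' : Fin (e+1) → Fin m :=
        fun i => if i = π (Fin.last e) then
            (⟨(x (π (Fin.last e)) : ℕ) - 1,
              Nat.lt_of_le_of_lt (Nat.sub_le _ 1) (x (π (Fin.last e))).isLt⟩ : Fin m)
          else x i with hx'def
      set π' := π * (finRotate (e+1))⁻¹ with hπ'def
      have hπ'0 : π' 0 = π (Fin.last e) := by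
        rw [hπ'def]
        have : (finRotate (e+1))⁻¹ (0 : Fin (e+1)) = Fin.last e := by
          apply (finRotate (e+1)).injective
          simp [finRotate_last]
        simp [Equiv.Perm.mul_apply, this]
      have hxv : ∀ i, (x i : ℕ) = (x' i : ℕ) + if i = π' 0 then 1 else 0 := by
        intro i
        rw [hπ'0]
        by_cases h : i = π (Fin.last e)
        · rw [if_pos h, h]
          simp only [hx'def, if_pos rfl]
          omega
        · rw [if_neg h]
          simp [hx'def, h]
      have hππ : π' * finRotate (e+1) = π := by
        rw [hπ'def, inv_mul_cancel_right]
      have hvr : ∀ j : Fin (e+1), vert x π j.castSucc = vert x' π' j.succ := by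
        intro j
        have := vert_rot x' x π' hxv j
        rwa [hππ] at this
      have hlabr : ∀ j : Fin (e+1),
          lab ℓ (x, π) j.castSucc = lab ℓ (x', π') j.succ := fun j =>
        congrArg ℓ (hvr j)
      rw [hpart]
      refine ⟨?_, ?_, ?_, ?_⟩
      · exact door_rot_bwd ℓ (x', π') (x, π) hlabr hD
      · intro hBnd
        exact Fin.last_pos.ne' hBnd.1.symm
      · have hxm2 : (x' (π' 0) : ℕ) + 1 < m := by
          rw [hπ'0, show x' (π (Fin.last e)) =
            (⟨(x (π (Fin.last e)) : ℕ) - 1,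
              Nat.lt_of_le_of_lt (Nat.sub_le _ 1) (x (π (Fin.last e))).isLt⟩ : Fin m)
            from by simp [hx'def]]
          have h9 := (x (π (Fin.last e))).isLt
          show (x (π (Fin.last e)) : ℕ) - 1 + 1 < m
          omega
        have : partner ((x', π'), (0 : Fin (e+2))) =
            ((fun i => if i = π' 0 then (⟨(x' (π' 0) : ℕ) + 1, hxm2⟩ : Fin m) else x' i,
              π' * finRotate (e+1)), Fin.last (e+1)) := by
          simp only [partner]
          rw [dif_pos trivial, dif_pos hxm2]
        rw [this]
        refine Prod.ext (Prod.ext ?_ ?_) rfl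
        · funext i
          simp only
          by_cases h : i = π (Fin.last e)
          · rw [if_pos (by rw [hπ'0, h]), h]
            apply Fin.ext
            simp only [hπ'0, hx'def, if_pos rfl]
            omega
          · rw [if_neg (by rw [hπ'0]; exact h)]
            simp [hx'def, h]
        · simp only
          exact hππ
      · intro h
        exact Fin.last_pos.ne' (congrArg Prod.snd h).symm
    · -- middle pivot: swap two transitions
      have hk0' : (k : ℕ) ≠ 0 := fun h => hk0 (Fin.ext h)
      have hkl' : (k : ℕ) ≠ e + 1 := fun h => hkl (Fin.ext (by simpa using h))
      have hklt := k.isLt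
      set a : Fin (e+1) := ⟨(k:ℕ)-1, by omega⟩ with ha
      set b : Fin (e+1) := ⟨(k:ℕ)-1+1, by omega⟩ with hb
      have hab : (a : ℕ) + 1 = (b : ℕ) := rfl
      have habne : a ≠ b := by
        intro h
        have := congrArg Fin.val h
        simp only [ha, hb] at this
        omega
      have hbk : (b : ℕ) = (k : ℕ) := by simp only [hb]; omega
      have hpart : partner ((x, π), k) = ((x, π * Equiv.swap a b), k) := by
        simp only [partner]
        rw [dif_neg hk0, dif_neg hkl]
      have hlabeq : ∀ j, j ≠ k →
          lab ℓ ((x, π * Equiv.swap a b) : Room (e+1) m) j = lab ℓ (x, π) j := by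
        intro j hj
        exact congrArg ℓ (vert_swap x π a b hab j (by rw [hbk]; exact Fin.val_ne_of_ne hj))
      rw [hpart]
      refine ⟨?_, ?_, ?_, ?_⟩
      · exact door_congr ℓ (x, π) (x, π * Equiv.swap a b) k hlabeq hD
      · intro hBnd
        exact hkl hBnd.1
      · have : partner ((x, π * Equiv.swap a b), k) =
            ((x, π * Equiv.swap a b * Equiv.swap a b), k) := by
          simp only [partner]
          rw [dif_neg hk0, dif_neg hkl]
        rw [this, mul_assoc, Equiv.swap_mul_self, mul_one]
      · intro h
        have hπeq : π * Equiv.swap a b = π :=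
          congrArg Prod.snd (congrArg Prod.fst h)
        have : Equiv.swap a b a = a := by
          have := congrArg (fun σ : Equiv.Perm (Fin (e+1)) => σ a) hπeq
          simp only [Equiv.Perm.mul_apply] at this
          exact π.injective this
        rw [Equiv.swap_apply_left] at this
        exact habne this.symm

end Partner

section Restrict
variable {e m : ℕ}

/-- restriction of a permutation fixing the last element -/
def resPerm (π : Equiv.Perm (Fin (e+1))) : Equiv.Perm (Fin e) :=
  Equiv.removeNone (finSuccEquivLast.permCongr π)

def extPerm (σ : Equiv.Perm (Fin e)) : Equiv.Perm (Fin (e+1)) :=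
  finSuccEquivLast.symm.permCongr σ.optionCongr

lemma extPerm_castSucc (σ : Equiv.Perm (Fin e)) (i : Fin e) :
    extPerm σ i.castSucc = (σ i).castSucc := by
  simp [extPerm, Equiv.permCongr_apply]

lemma extPerm_last (σ : Equiv.Perm (Fin e)) : extPerm σ (Fin.last e) = Fin.last e := by
  simp [extPerm, Equiv.permCongr_apply]

lemma resPerm_spec (π : Equiv.Perm (Fin (e+1))) (h : π (Fin.last e) = Fin.last e)
    (i : Fin e) : (resPerm π i).castSucc = π i.castSucc := by
  have hne : π i.castSucc ≠ Fin.last e := by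
    intro hc
    have := π.injective (hc.trans h.symm)
    exact (Fin.castSucc_lt_last i).ne this
  obtain ⟨j, hj⟩ := Fin.exists_castSucc_eq.2 hne
  have hsome : (finSuccEquivLast.permCongr π) (some i) = some j := by
    simp only [Equiv.permCongr_apply]
    rw [show (finSuccEquivLast.symm (some i) : Fin (e+1)) = i.castSucc from by simp, ← hj]
    simp
  have := Equiv.removeNone_some (finSuccEquivLast.permCongr π) ⟨j, hsome⟩
  rw [hsome] at this
  have hij : resPerm π i = j := Option.some_injective _ this
  rw [hij, hj]

lemma resPerm_symm_spec (π : Equiv.Perm (Fin (e+1))) (h : π (Fin.last e) = Fin.last e)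
    (i : Fin e) : ((resPerm π).symm i).castSucc = π.symm i.castSucc := by
  apply π.injective
  rw [Equiv.apply_symm_apply, ← resPerm_spec π h, Equiv.apply_symm_apply]

lemma resPerm_extPerm (σ : Equiv.Perm (Fin e)) : resPerm (extPerm σ) = σ := by
  ext i
  have h1 := resPerm_spec (extPerm σ) (extPerm_last σ) i
  rw [extPerm_castSucc] at h1
  have := congrArg Fin.val h1
  simpa using this

lemma extPerm_resPerm (π : Equiv.Perm (Fin (e+1))) (h : π (Fin.last e) = Fin.last e) :
    extPerm (resPerm π) = π := by
  ext i
  refine Fin.lastCases ?_ ?_ i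
  · rw [extPerm_last, h]
  · intro j
    rw [extPerm_castSucc, resPerm_spec π h]

lemma vert_restrict (x : Fin (e+1) → Fin m) (π : Equiv.Perm (Fin (e+1)))
    (hπ : π (Fin.last e) = Fin.last e) (hx0 : (x (Fin.last e) : ℕ) = 0)
    (j : Fin (e+1)) :
    vert x π j.castSucc = Fin.snoc (vert (fun i => x i.castSucc) (resPerm π) j) 0 := by
  funext i
  refine Fin.lastCases ?_ ?_ i
  · rw [Fin.snoc_last]
    unfold vert
    have hs : π.symm (Fin.last e) = Fin.last e := by
      apply π.injective; rw [Equiv.apply_symm_apply, hπ]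
    rw [hs]
    rw [if_neg (by simp only [Fin.val_last, Fin.coe_castSucc]; have := j.isLt; omega)]
    omega
  · intro i'
    rw [Fin.snoc_castSucc]
    unfold vert
    have hs : π.symm i'.castSucc = ((resPerm π).symm i').castSucc :=
      (resPerm_symm_spec π hπ i').symm
    rw [hs]
    simp only [Fin.coe_castSucc]

end Restrict


/-- Kuhn's cubical Sperner lemma: the number of fully-labelled Freudenthal
simplices is odd. -/
theorem sperner_odd (d : ℕ) : ∀ (m : ℕ), 0 < m → ∀ (ℓ : (Fin d → ℕ) → ℕ),
    (∀ v, (∀ i, v i ≤ m) → ℓ v ≤ d) →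
    (∀ v, (∀ i, v i ≤ m) → ∀ i : Fin d, v i = 0 → ℓ v ≠ (i:ℕ)+1) →
    (∀ v, (∀ i, v i ≤ m) → ∀ i : Fin d, v i = m → 1 ≤ ℓ v ∧ ℓ v ≤ (i:ℕ)+1) →
    Odd ((univ.filter (fun r : Room d m => Full ℓ r)).card) := by
  induction d with
  | zero =>
    intro m hm ℓ H0 _ _
    have hfull : ∀ r : Room 0 m, Full ℓ r := by
      intro r c hc
      have hc0 : c = 0 := Nat.le_zero.1 hc
      refine ⟨0, ?_⟩
      have := H0 (vert r.1 r.2 0) (fun i => i.elim0)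
      unfold lab
      omega
    rw [filter_true_of_mem (fun r _ => hfull r), card_univ]
    have h1 : Fintype.card (Room 0 m) = 1 := by
      rw [Fintype.card_prod]
      simp
    rw [h1]
    exact odd_one
  | succ e ih =>
    intro m hm ℓ H0 HA HB
    have hgrid : ∀ (r : Room (e+1) m) (k : Fin (e+2)) (i : Fin (e+1)),
        vert r.1 r.2 k i ≤ m := fun r k i => vert_le r.1 r.2 k i
    set T : Finset (Room (e+1) m × Fin (e+2)) :=
      univ.filter (fun p => Door ℓ p.1 p.2) with hT
    set Bs : Finset (Room (e+1) m × Fin (e+2)) := T.filter (fun p => Bnd p) with hBs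
    -- Step 1: #Full ≡ #T (mod 2)
    have hTcard : T.card = ∑ r : Room (e+1) m, (univ.filter (Door ℓ r)).card := by
      rw [hT, card_filter, Fintype.sum_prod_type]
      simp only [card_filter]
    have hroom : ∀ r : Room (e+1) m,
        (univ.filter (Door ℓ r)).card % 2 = (if Full ℓ r then 1 else 0) % 2 := by
      intro r
      by_cases hF : Full ℓ r
      · rw [doorCard_of_full ℓ r (fun k => H0 _ (fun i => hgrid r k i)) hF, if_pos hF]
      · rw [if_neg hF]
        have hEv := doorCard_even_of_not_full ℓ r (fun k => H0 _ (fun i => hgrid r k i)) hF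
        rw [Nat.even_iff.1 hEv]
    have h1 : (univ.filter (fun r : Room (e+1) m => Full ℓ r)).card % 2 = T.card % 2 := by
      rw [card_filter, hTcard, Finset.sum_nat_mod univ 2, Finset.sum_nat_mod univ 2
        (fun r : Room (e+1) m => (univ.filter (Door ℓ r)).card)]
      congr 1
      exact Finset.sum_congr rfl (fun r _ => ((hroom r).symm))
    -- Step 2: #T ≡ #Bs (mod 2) via the pivot involution
    have hBsub : Bs ⊆ T := filter_subset _ _
    have hTBmem : ∀ p, p ∈ T \ Bs ↔ Door ℓ p.1 p.2 ∧ ¬ Bnd p := by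
      intro p
      simp only [Finset.mem_sdiff, hBs, hT, mem_filter, mem_univ, true_and]
      tauto
    have hEvTB : Even (T \ Bs).card := by
      apply even_card_of_invol (T \ Bs) partner
      · intro p hp
        obtain ⟨hD, hnB⟩ := (hTBmem p).1 hp
        obtain ⟨hD', hnB', _, _⟩ := partner_props ℓ HA HB p hD hnB
        exact (hTBmem _).2 ⟨hD', hnB'⟩
      · intro p hp
        obtain ⟨hD, hnB⟩ := (hTBmem p).1 hp
        exact (partner_props ℓ HA HB p hD hnB).2.2.1
      · intro p hp
        obtain ⟨hD, hnB⟩ := (hTBmem p).1 hp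
        exact (partner_props ℓ HA HB p hD hnB).2.2.2
    have h2 : T.card % 2 = Bs.card % 2 := by
      have := Finset.card_sdiff_add_card_eq_card hBsub
      obtain ⟨t, ht⟩ := hEvTB
      omega
    -- Step 3: #Bs = #Full in dimension e
    set ℓ' : (Fin e → ℕ) → ℕ := fun v => ℓ (Fin.snoc v 0) with hℓ'
    have hgrid' : ∀ v : Fin e → ℕ, (∀ i, v i ≤ m) →
        ∀ i : Fin (e+1), (Fin.snoc v 0 : Fin (e+1) → ℕ) i ≤ m := by
      intro v hv i
      refine Fin.lastCases ?_ ?_ i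
      · rw [Fin.snoc_last]; omega
      · intro j; rw [Fin.snoc_castSucc]; exact hv j
    have hBsmem : ∀ p : Room (e+1) m × Fin (e+2), p ∈ Bs ↔
        Door ℓ p.1 p.2 ∧ p.2 = Fin.last (e+1) ∧ (p.1.1 (p.1.2 (Fin.last e)) : ℕ) = 0 := by
      intro p
      simp only [hBs, hT, mem_filter, mem_univ, true_and]
      unfold Bnd
      tauto
    -- in a boundary door, π fixes the last coordinate
    have hπlast : ∀ p : Room (e+1) m × Fin (e+2), p ∈ Bs → p.1.2 (Fin.last e) = Fin.last e := by
      intro p hp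
      obtain ⟨hD, hkl, hx0⟩ := (hBsmem p).1 hp
      by_contra hne
      rw [hkl] at hD
      exact not_door_bot ℓ HA p.1.1 p.1.2 hx0 hne hD
    have hx0last : ∀ p : Room (e+1) m × Fin (e+2), p ∈ Bs → (p.1.1 (Fin.last e) : ℕ) = 0 := by
      intro p hp
      have h := ((hBsmem p).1 hp).2.2
      rwa [hπlast p hp] at h
    -- label transfer on the bottom face
    have hlabres : ∀ (x : Fin (e+1) → Fin m) (π : Equiv.Perm (Fin (e+1))),
        π (Fin.last e) = Fin.last e → (x (Fin.last e) : ℕ) = 0 → ∀ j : Fin (e+1),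
        lab ℓ ((x, π) : Room (e+1) m) j.castSucc
          = ℓ' (vert (fun i => x i.castSucc) (resPerm π) j) := by
      intro x π hπ hx0 j
      unfold lab
      rw [vert_restrict x π hπ hx0 j]
    -- the boundary doors biject with full rooms downstairs
    have h3 : Bs.card = (univ.filter (fun r : Room e m => Full ℓ' r)).card := by
      apply Finset.card_nbij'
        (i := fun p => ((fun i => p.1.1 i.castSucc, resPerm p.1.2) : Room e m))
        (j := fun r => (((Fin.snoc r.1 ⟨0, hm⟩, extPerm r.2) : Room (e+1) m),
          Fin.last (e+1)))
      · intro p hp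
        obtain ⟨hD, hkl, _⟩ := (hBsmem p).1 hp
        have hπ := hπlast p hp
        have hx0 := hx0last p hp
        rw [Finset.mem_coe, mem_filter]
        refine ⟨mem_univ _, ?_⟩
        intro c hc
        rw [hkl] at hD
        obtain ⟨j, hj, hjc⟩ := hD.2 c (by omega)
        obtain ⟨j', rfl⟩ := Fin.exists_castSucc_eq.2 hj
        refine ⟨j', ?_⟩
        have hthis := hlabres p.1.1 p.1.2 hπ hx0 j'
        rw [show ((p.1.1, p.1.2) : Room (e+1) m) = p.1 from rfl] at hthis
        show ℓ' (vert (fun i => p.1.1 i.castSucc) (resPerm p.1.2) j') = c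
        rw [← hthis]
        exact hjc
      · intro r hr
        rw [Finset.mem_coe, mem_filter] at hr
        have hFull := hr.2
        have hπ : extPerm r.2 (Fin.last e) = Fin.last e := extPerm_last r.2
        have hx0 : ((Fin.snoc r.1 (⟨0, hm⟩ : Fin m) : Fin (e+1) → Fin m) (Fin.last e) : ℕ) = 0 := by
          rw [Fin.snoc_last]
        have hresx : (fun i : Fin e => (Fin.snoc r.1 (⟨0, hm⟩ : Fin m) : Fin (e+1) → Fin m) i.castSucc) = r.1 := by
          funext i; rw [Fin.snoc_castSucc]
        have hres : resPerm (extPerm r.2) = r.2 := resPerm_extPerm r.2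
        have hlab2 : ∀ j : Fin (e+1),
            lab ℓ ((Fin.snoc r.1 ⟨0, hm⟩, extPerm r.2) : Room (e+1) m) j.castSucc
              = ℓ' (vert r.1 r.2 j) := by
          intro j
          rw [hlabres _ _ hπ hx0 j, hresx, hres]
        have hle : ∀ j : Fin (e+1),
            lab ℓ ((Fin.snoc r.1 ⟨0, hm⟩, extPerm r.2) : Room (e+1) m) j.castSucc ≤ e := by
          intro j
          rw [hlab2 j]
          have hgr : ∀ i, vert r.1 r.2 j i ≤ m := fun i => vert_le r.1 r.2 j i
          have hH0 := H0 (Fin.snoc (vert r.1 r.2 j) 0) (hgrid' _ hgr)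
          have hHA := HA (Fin.snoc (vert r.1 r.2 j) 0) (hgrid' _ hgr) (Fin.last e)
            (by rw [Fin.snoc_last]) 
          simp only [Fin.val_last] at hHA
          have : ℓ' (vert r.1 r.2 j) = ℓ (Fin.snoc (vert r.1 r.2 j) 0) := rfl
          omega
        rw [Finset.mem_coe, hBsmem]
        refine ⟨?_, rfl, by rw [hπ]; exact hx0⟩
        constructor
        · intro j hj
          obtain ⟨j', rfl⟩ := Fin.exists_castSucc_eq.2 hj
          have h5 := hle j'
          show lab ℓ ((Fin.snoc r.1 ⟨0, hm⟩, extPerm r.2) : Room (e+1) m) j'.castSucc < e+1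
          omega
        · intro c hc
          obtain ⟨k, hk⟩ := hFull c (by omega)
          refine ⟨k.castSucc, (Fin.castSucc_lt_last k).ne, ?_⟩
          show lab ℓ ((Fin.snoc r.1 ⟨0, hm⟩, extPerm r.2) : Room (e+1) m) k.castSucc = c
          rw [hlab2 k]
          exact hk
      · intro p hp
        obtain ⟨hD, hkl, _⟩ := (hBsmem p).1 hp
        have hπ := hπlast p hp
        have hx0 := hx0last p hp
        have hxeq : (Fin.snoc (fun i : Fin e => p.1.1 i.castSucc) (⟨0, hm⟩ : Fin m)) = p.1.1 := by
          funext i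
          refine Fin.lastCases ?_ ?_ i
          · rw [Fin.snoc_last]
            exact (Fin.ext hx0.symm : (⟨0, hm⟩ : Fin m) = p.1.1 (Fin.last e))
          · intro j; rw [Fin.snoc_castSucc]
        have hπeq : extPerm (resPerm p.1.2) = p.1.2 := extPerm_resPerm p.1.2 hπ
        beta_reduce
        rw [hxeq, hπeq, ← hkl]
      · intro r hr
        have hresx : (fun i : Fin e => (Fin.snoc r.1 (⟨0, hm⟩ : Fin m) : Fin (e+1) → Fin m) i.castSucc) = r.1 := by
          funext i; rw [Fin.snoc_castSucc]
        have hres : resPerm (extPerm r.2) = r.2 := resPerm_extPerm r.2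
        simp only
        rw [hresx, hres]
    -- Step 4: conclude
    have h4 := ih m hm ℓ'
      (by
        intro v hv
        have hH0 := H0 (Fin.snoc v 0) (hgrid' v hv)
        have hHA := HA (Fin.snoc v 0) (hgrid' v hv) (Fin.last e) (by rw [Fin.snoc_last])
        simp only [Fin.val_last] at hHA
        have : ℓ' v = ℓ (Fin.snoc v 0) := rfl
        omega)
      (by
        intro v hv i hi
        have := HA (Fin.snoc v 0) (hgrid' v hv) i.castSucc
          (by rw [Fin.snoc_castSucc]; exact hi)
        simpa using this)
      (by
        intro v hv i hi
        have := HB (Fin.snoc v 0) (hgrid' v hv) i.castSucc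
          (by rw [Fin.snoc_castSucc]; exact hi)
        simpa using this)
    rw [Nat.odd_iff] at h4 ⊢
    rw [h1, h2, h3]
    exact h4


open Filter Topology

theorem poincare_miranda (d : ℕ) (f : (Fin d → ℝ) → (Fin d → ℝ))
    (hf : ∀ i : Fin d, Continuous fun x => f x i)
    (hlo : ∀ x, (∀ j, x j ∈ Set.Icc (0:ℝ) 1) → ∀ i, x i = 0 → 0 ≤ f x i)
    (hhi : ∀ x, (∀ j, x j ∈ Set.Icc (0:ℝ) 1) → ∀ i, x i = 1 → f x i ≤ 0) :
    ∃ x : Fin d → ℝ, (∀ j, x j ∈ Set.Icc (0:ℝ) 1) ∧ ∀ i, f x i = 0 := by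
  classical
  -- Step A: approximate solutions at every scale
  have key : ∀ q : ℕ, ∃ a : Fin d → ℝ, (∀ j, a j ∈ Set.Icc (0:ℝ) 1) ∧ ∀ i : Fin d,
      (∃ u, (∀ j, u j ∈ Set.Icc (0:ℝ) 1) ∧ (∀ j, |u j - a j| ≤ 1/((q:ℝ)+1)) ∧
        f u i ≤ 1/((q:ℝ)+1)) ∧
      (∃ w, (∀ j, w j ∈ Set.Icc (0:ℝ) 1) ∧ (∀ j, |w j - a j| ≤ 1/((q:ℝ)+1)) ∧
        -(1/((q:ℝ)+1)) ≤ f w i) := by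
    intro q
    set m : ℕ := q + 1 with hm_def
    have hm : 0 < m := Nat.succ_pos q
    set ε : ℝ := 1/((q:ℝ)+1) with hε_def
    have hε : 0 < ε := by positivity
    have hmε : (m : ℝ) = ((q:ℝ)+1) := by rw [hm_def]; push_cast; ring
    set P : (Fin d → ℕ) → (Fin d → ℝ) := fun v j => (v j : ℝ)/((m:ℕ):ℝ) with hP
    have hPcube : ∀ v : Fin d → ℕ, (∀ j, v j ≤ m) → ∀ j, P v j ∈ Set.Icc (0:ℝ) 1 := by
      intro v hv j
      constructor
      · positivity
      · simp only [hP]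
        rw [div_le_one (by positivity)]
        exact_mod_cast hv j
    set F : Fin d → (Fin d → ℝ) → ℝ := fun i x => f x i + ε * (1 - 2 * x i) with hF
    set S : (Fin d → ℕ) → Finset (Fin d) :=
      fun v => univ.filter (fun i : Fin d => F i (P v) < 0) with hS
    set ℓ : (Fin d → ℕ) → ℕ := fun v =>
      if h : (S v).Nonempty then (((S v).min' h : Fin d) : ℕ) + 1 else 0 with hℓ
    have H0 : ∀ v, (∀ j, v j ≤ m) → ℓ v ≤ d := by
      intro v _
      simp only [hℓ]
      split
      · next h => have := ((S v).min' h).isLt; omega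
      · omega
    have HA : ∀ v, (∀ j, v j ≤ m) → ∀ i : Fin d, v i = 0 → ℓ v ≠ (i:ℕ)+1 := by
      intro v hv i hvi hℓv
      have hPv0 : P v i = 0 := by simp only [hP]; rw [hvi]; simp
      have hFpos : 0 < F i (P v) := by
        have h1 : 0 ≤ f (P v) i := hlo (P v) (hPcube v hv) i hPv0
        simp only [hF]
        rw [hPv0]
        nlinarith
      have hiS : i ∉ S v := by
        rw [hS, mem_filter]
        push_neg
        intro _
        linarith
      simp only [hℓ] at hℓv
      rcases Classical.em (S v).Nonempty with h | h
      · rw [dif_pos h] at hℓv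
        have heq : ((S v).min' h) = i := Fin.ext (by omega)
        exact hiS (heq ▸ (S v).min'_mem h)
      · rw [dif_neg h] at hℓv
        omega
    have HB : ∀ v, (∀ j, v j ≤ m) → ∀ i : Fin d, v i = m → 1 ≤ ℓ v ∧ ℓ v ≤ (i:ℕ)+1 := by
      intro v hv i hvi
      have hPv1 : P v i = 1 := by
        simp only [hP]
        rw [hvi, div_self (by positivity)]
      have hFneg : F i (P v) < 0 := by
        have h1 : f (P v) i ≤ 0 := hhi (P v) (hPcube v hv) i hPv1
        simp only [hF]
        rw [hPv1]
        nlinarith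
      have hiS : i ∈ S v := by rw [hS, mem_filter]; exact ⟨mem_univ _, hFneg⟩
      have hne : (S v).Nonempty := ⟨i, hiS⟩
      simp only [hℓ]
      rw [dif_pos hne]
      have hle := (S v).min'_le i hiS
      rw [Fin.le_def] at hle
      omega
    obtain ⟨r, hr⟩ : ∃ r : Room d m, Full ℓ r := by
      have hodd := sperner_odd d m hm ℓ H0 HA HB
      have hne : (univ.filter (fun r : Room d m => Full ℓ r)).Nonempty := by
        rw [← Finset.card_pos]
        rcases hodd with ⟨t, ht⟩
        omega
      obtain ⟨r, hrmem⟩ := hne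
      exact ⟨r, (mem_filter.1 hrmem).2⟩
    set a : Fin d → ℝ := P (vert r.1 r.2 0) with ha
    have hvgrid : ∀ k : Fin (d+1), ∀ j, vert r.1 r.2 k j ≤ m :=
      fun k j => vert_le r.1 r.2 k j
    have hclose : ∀ k : Fin (d+1), ∀ j, |P (vert r.1 r.2 k) j - a j| ≤ ε := by
      intro k j
      have h1 : vert r.1 r.2 0 j = (r.1 j : ℕ) := by
        unfold vert
        rw [if_neg (by simp)]
        omega
      have h2 : vert r.1 r.2 k j = (r.1 j : ℕ) ∨ vert r.1 r.2 k j = (r.1 j : ℕ) + 1 := by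
        unfold vert
        split
        · right; rfl
        · left; rfl
      have hem : ε = 1/(m:ℝ) := by rw [hε_def, hmε]
      simp only [ha, hP]
      rcases h2 with h2 | h2 <;> rw [h2, h1]
      · simpa using hε.le
      · rw [div_sub_div_same]
        have hnum : ((((r.1 j : ℕ) + 1 : ℕ)):ℝ) - ((r.1 j : ℕ):ℝ) = 1 := by push_cast; ring
        rw [hnum, hem, abs_of_nonneg (by positivity)]
    refine ⟨a, fun j => hPcube _ (hvgrid 0) j, ?_⟩
    intro i
    constructor
    · -- a vertex labelled i+1 : f ≤ ε there
      obtain ⟨k1, hk1⟩ := hr ((i:ℕ)+1) (by have := i.isLt; omega)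
      have hk1' : ℓ (vert r.1 r.2 k1) = (i:ℕ)+1 := hk1
      simp only [hℓ] at hk1'
      rcases Classical.em (S (vert r.1 r.2 k1)).Nonempty with h | h
      · rw [dif_pos h] at hk1'
        have hmin : (S (vert r.1 r.2 k1)).min' h = i := Fin.ext (by omega)
        have hiS : i ∈ S (vert r.1 r.2 k1) := hmin ▸ (S _).min'_mem h
        simp only [hS, mem_filter] at hiS
        have hFi := hiS.2
        refine ⟨P (vert r.1 r.2 k1), fun j => hPcube _ (hvgrid k1) j,
          fun j => hclose k1 j, ?_⟩
        have hcube := hPcube _ (hvgrid k1) i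
        have hub := hcube.2
        simp only [hF] at hFi
        nlinarith
      · rw [dif_neg h] at hk1'
        omega
    · -- a vertex labelled 0 : f ≥ -ε there
      obtain ⟨k0, hk0⟩ := hr 0 (Nat.zero_le d)
      have hk0' : ℓ (vert r.1 r.2 k0) = 0 := hk0
      simp only [hℓ] at hk0'
      rcases Classical.em (S (vert r.1 r.2 k0)).Nonempty with h | h
      · rw [dif_pos h] at hk0'
        omega
      · have hFi : ¬ (F i (P (vert r.1 r.2 k0)) < 0) := by
          intro hlt
          exact h ⟨i, by simp only [hS, mem_filter]; exact ⟨mem_univ _, hlt⟩⟩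
        push_neg at hFi
        refine ⟨P (vert r.1 r.2 k0), fun j => hPcube _ (hvgrid k0) j,
          fun j => hclose k0 j, ?_⟩
        have hcube := hPcube _ (hvgrid k0) i
        have hlb := hcube.1
        simp only [hF] at hFi
        nlinarith
  -- Step B: pass to the limit
  set A : ℕ → (Fin d → ℝ) := fun q => (key q).choose with hA_def
  have hA : ∀ q, ∀ j, A q j ∈ Set.Icc (0:ℝ) 1 := fun q => (key q).choose_spec.1
  have hAprop := fun q => (key q).choose_spec.2
  have hKcomp : IsCompact (Set.pi Set.univ (fun _ : Fin d => Set.Icc (0:ℝ) 1)) :=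
    isCompact_univ_pi (fun _ => isCompact_Icc)
  have hAK : ∀ q, A q ∈ Set.pi Set.univ (fun _ : Fin d => Set.Icc (0:ℝ) 1) :=
    fun q => Set.mem_univ_pi.2 (fun j => hA q j)
  obtain ⟨x, hxK, φ, hφ, hconv⟩ := hKcomp.tendsto_subseq hAK
  refine ⟨x, fun j => Set.mem_univ_pi.1 hxK j, ?_⟩
  intro i
  have hεt : Tendsto (fun t : ℕ => 1/((φ t : ℝ)+1)) atTop (𝓝 0) :=
    tendsto_one_div_add_atTop_nhds_zero_nat.comp hφ.tendsto_atTop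
  have hcoord : ∀ j, Tendsto (fun t => A (φ t) j) atTop (𝓝 (x j)) :=
    fun j => ((continuous_apply j).tendsto x).comp hconv
  have hlim : ∀ (u : ℕ → Fin d → ℝ),
      (∀ q j, |u q j - A q j| ≤ 1/((q:ℝ)+1)) →
      Tendsto (fun t => f (u (φ t)) i) atTop (𝓝 (f x i)) := by
    intro u hu2
    have huconv : Tendsto (fun t => u (φ t)) atTop (𝓝 x) := by
      rw [tendsto_pi_nhds]
      intro j
      have hdiff : Tendsto (fun t => u (φ t) j - A (φ t) j) atTop (𝓝 0) := by
        apply squeeze_zero_norm ?_ hεt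
        intro t
        rw [Real.norm_eq_abs]
        exact hu2 (φ t) j
      have := hdiff.add (hcoord j)
      simpa using this
    exact ((hf i).tendsto x).comp huconv
  apply le_antisymm
  · set u : ℕ → (Fin d → ℝ) := fun q => ((hAprop q) i).1.choose with hu
    have hu2 : ∀ q j, |u q j - A q j| ≤ 1/((q:ℝ)+1) :=
      fun q => ((hAprop q) i).1.choose_spec.2.1
    have hu3 : ∀ q, f (u q) i ≤ 1/((q:ℝ)+1) :=
      fun q => ((hAprop q) i).1.choose_spec.2.2
    have h0 : Tendsto (fun _ : ℕ => (0:ℝ)) atTop (𝓝 0) := tendsto_const_nhds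
    exact le_of_tendsto_of_tendsto' (hlim u hu2) hεt (fun t => hu3 (φ t))
  · set w : ℕ → (Fin d → ℝ) := fun q => ((hAprop q) i).2.choose with hw
    have hw2 : ∀ q j, |w q j - A q j| ≤ 1/((q:ℝ)+1) :=
      fun q => ((hAprop q) i).2.choose_spec.2.1
    have hw3 : ∀ q : ℕ, -(1/((q:ℝ)+1)) ≤ f (w q) i :=
      fun q => ((hAprop q) i).2.choose_spec.2.2
    have := le_of_tendsto_of_tendsto' (hεt.neg) (hlim w hw2) (fun t => hw3 (φ t))
    simpa using this


end PMSperner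

/-- The `ℓ_p` norm `‖x‖_p = (∑ i, |x i|^p)^{1/p}` on `ℝⁿ = Fin n → ℝ`. -/
noncomputable def lpNorm (p : ℝ) {n : ℕ} (x : Fin n → ℝ) : ℝ :=
  (∑ i, |x i| ^ p) ^ (1 / p)

/-- Let `n > 2`, `1 < p < ∞`, `R ≥ 1`, and let `β, γ > 0` satisfy
`(γ + β)^p + γ^p ≥ R^p` and `(n - 2) β^p + 2 γ^p ≤ 1`.  If `ν` is a norm on `ℝⁿ`
(given by its triangle inequality and absolute homogeneity) with
`ν x ≤ ‖x‖_p ≤ R ν x` for all `x`, then there exist `n` points in `ℝⁿ` that are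
pairwise at `ν`-distance `1`. -/
theorem exists_equilateral_points_of_sandwich_lp (n : ℕ) (hn : 2 < n)
    (p : ℝ) (hp : 1 < p) (R : ℝ) (hR : 1 ≤ R) (β γ : ℝ) (hβ : 0 < β) (hγ : 0 < γ)
    (hcond1 : R ^ p ≤ (γ + β) ^ p + γ ^ p)
    (hcond2 : ((n : ℝ) - 2) * β ^ p + 2 * γ ^ p ≤ 1)
    (ν : (Fin n → ℝ) → ℝ)
    (hν_add : ∀ x y : Fin n → ℝ, ν (x + y) ≤ ν x + ν y)
    (hν_smul : ∀ (a : ℝ) (x : Fin n → ℝ), ν (a • x) = |a| * ν x)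
    (h_le : ∀ x : Fin n → ℝ, ν x ≤ lpNorm p x)
    (h_ge : ∀ x : Fin n → ℝ, lpNorm p x ≤ R * ν x) :
    ∃ q : Fin n → (Fin n → ℝ),
      ∀ i j : Fin n, i < j → ν (q i - q j) = 1 := by
  classical
  have hp0 : (0:ℝ) < p := by linarith
  have hpne : p ≠ 0 := ne_of_gt hp0
  have hR0 : (0:ℝ) < R := lt_of_lt_of_le one_pos hR
  -- basic facts about ν
  have hν0 : ν 0 = 0 := by
    have := hν_smul 0 0
    simpa using this
  have hνneg : ∀ x, ν (-x) = ν x := by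
    intro x
    have := hν_smul (-1) x
    simpa using this
  have hν_nonneg : ∀ x, 0 ≤ ν x := by
    intro x
    have h1 := hν_add x (-x)
    rw [add_neg_cancel, hν0, hνneg] at h1
    linarith
  -- ν is dominated by the ℓ¹ norm
  have hlp_unit : ∀ k : Fin n, lpNorm p (fun l => if k = l then (1:ℝ) else 0) = 1 := by
    intro k
    unfold lpNorm
    have : ∀ l : Fin n, |if k = l then (1:ℝ) else 0| ^ p = if k = l then 1 else 0 := by
      intro l
      split
      · simp [Real.one_rpow]
      · simp [Real.zero_rpow hpne]
    rw [Finset.sum_congr rfl (fun l _ => this l)]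
    rw [Finset.sum_ite_eq univ k (fun _ => (1:ℝ))]
    simp [Real.one_rpow]
  have hν_sum : ∀ z : Fin n → ℝ, ν z ≤ ∑ k, |z k| := by
    intro z
    have hrepr : z = ∑ k : Fin n, z k • (fun l => if k = l then (1:ℝ) else 0) :=
      pi_eq_sum_univ z
    calc ν z = ν (∑ k : Fin n, z k • (fun l => if k = l then (1:ℝ) else 0)) := by
          rw [← hrepr]
    _ ≤ ∑ k : Fin n, ν (z k • (fun l => if k = l then (1:ℝ) else 0)) :=
          Finset.le_sum_of_subadditive ν hν0.le hν_add _ _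
    _ ≤ ∑ k, |z k| := by
          apply Finset.sum_le_sum
          intro k _
          rw [hν_smul]
          have h1 : ν (fun l => if k = l then (1:ℝ) else 0) ≤ 1 := by
            calc ν _ ≤ lpNorm p _ := h_le _
            _ = 1 := hlp_unit k
          calc |z k| * ν (fun l => if k = l then (1:ℝ) else 0) ≤ |z k| * 1 :=
                mul_le_mul_of_nonneg_left h1 (abs_nonneg _)
          _ = |z k| := mul_one _
  have hν_cont : Continuous ν := by
    rw [continuous_iff_continuousAt]
    intro y
    have hgc : Continuous (fun x : Fin n → ℝ => ∑ k, |x k - y k|) := by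
      apply continuous_finset_sum
      intro k _
      exact ((continuous_apply k).sub continuous_const).abs
    have hg0 : Tendsto (fun x : Fin n → ℝ => ∑ k, |x k - y k|) (𝓝 y) (𝓝 0) := by
      have := hgc.tendsto y
      simpa using this
    unfold ContinuousAt
    rw [tendsto_iff_dist_tendsto_zero]
    apply squeeze_zero (fun x => dist_nonneg) _ hg0
    intro x
    rw [Real.dist_eq, abs_le]
    have hxy : ν x ≤ ν y + ν (x - y) := by
      have := hν_add y (x - y)
      rwa [add_sub_cancel] at this
    have hyx : ν y ≤ ν x + ν (x - y) := by
      have := hν_add x (y - x)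
      rw [add_sub_cancel] at this
      have h2 : ν (y - x) = ν (x - y) := by
        rw [← hνneg (y - x), neg_sub]
      linarith [this, h2.symm.le]
    have hsub : ν (x - y) ≤ ∑ k, |x k - y k| := by
      have := hν_sum (x - y)
      simpa [Pi.sub_apply] using this
    constructor <;> linarith

  -- the ℓ^p sum bounds
  have hsum_ub : ∀ (z : Fin n → ℝ) (i j : Fin n), i ≠ j → |z i| ≤ γ → |z j| ≤ γ →
      (∀ k, k ≠ i → k ≠ j → |z k| ≤ β) → lpNorm p z ≤ 1 := by
    intro z i j hij hzi hzj hzk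
    unfold lpNorm
    apply Real.rpow_le_one (Finset.sum_nonneg fun k _ => Real.rpow_nonneg (abs_nonneg _) p)
      ?_ (by positivity)
    have hmid : ∑ k, (if k = i ∨ k = j then γ^p else β^p) = 2*γ^p + ((n:ℝ)-2)*β^p := by
      rw [Finset.sum_ite, Finset.sum_const, Finset.sum_const]
      have h1 : univ.filter (fun k : Fin n => k = i ∨ k = j) = {i, j} := by
        ext k
        simp only [mem_filter, mem_univ, true_and, mem_insert, mem_singleton]
      have hc1 : (univ.filter (fun k : Fin n => k = i ∨ k = j)).card = 2 := by
        rw [h1, card_insert_of_notMem (by simpa using hij), card_singleton]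
      have hc2 : (univ.filter (fun k : Fin n => ¬(k = i ∨ k = j))).card = n - 2 := by
        have htot := Finset.card_filter_add_card_filter_not
          (s := (univ : Finset (Fin n))) (p := fun k : Fin n => k = i ∨ k = j)
        have hcu : (univ : Finset (Fin n)).card = n := by
          rw [card_univ, Fintype.card_fin]
        omega
      rw [hc1, hc2, nsmul_eq_mul, nsmul_eq_mul]
      have hcast : ((n - 2 : ℕ) : ℝ) = (n:ℝ) - 2 := by
        have h2n : 2 ≤ n := by omega
        push_cast [Nat.cast_sub h2n]
        ring
      rw [hcast]
      ring
    calc ∑ k, |z k|^p ≤ ∑ k, (if k = i ∨ k = j then γ^p else β^p) := by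
          apply Finset.sum_le_sum
          intro k _
          by_cases hk : k = i ∨ k = j
          · rw [if_pos hk]
            have : |z k| ≤ γ := by rcases hk with rfl | rfl; exacts [hzi, hzj]
            exact Real.rpow_le_rpow (abs_nonneg _) this hp0.le
          · rw [if_neg hk]
            push_neg at hk
            exact Real.rpow_le_rpow (abs_nonneg _) (hzk k hk.1 hk.2) hp0.le
    _ = 2*γ^p + ((n:ℝ)-2)*β^p := hmid
    _ ≤ 1 := by linarith
  have hsum_lb : ∀ (z : Fin n → ℝ) (i j : Fin n), i ≠ j → |z i| = γ + β → |z j| = γ →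
      R ≤ lpNorm p z := by
    intro z i j hij hzi hzj
    unfold lpNorm
    have h1 : R^p ≤ ∑ k, |z k|^p := by
      calc R^p ≤ (γ+β)^p + γ^p := hcond1
      _ = |z i|^p + |z j|^p := by rw [hzi, hzj]
      _ = ∑ k ∈ ({i,j} : Finset (Fin n)), |z k|^p := (Finset.sum_pair (f := fun k => |z k| ^ p) hij).symm
      _ ≤ ∑ k, |z k|^p := Finset.sum_le_sum_of_subset_of_nonneg (subset_univ _)
            (fun k _ _ => Real.rpow_nonneg (abs_nonneg _) p)
    calc R = (R^p)^(1/p) := by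
          rw [← Real.rpow_mul hR0.le, mul_one_div_cancel hpne, Real.rpow_one]
    _ ≤ (∑ k, |z k|^p)^(1/p) := Real.rpow_le_rpow (by positivity) h1 (by positivity)
  -- the construction
  set ι := {pr : Fin n × Fin n // pr.1 < pr.2} with hι
  set D := Fintype.card ι with hD
  set E : ι ≃ Fin D := Fintype.equivFin ι with hE
  set TT : (Fin D → ℝ) → Fin n → Fin n → ℝ :=
    fun s k a => if h : k < a then β * s (E ⟨(k,a),h⟩) else 0 with hTT
  set Q : (Fin D → ℝ) → Fin n → (Fin n → ℝ) :=
    fun s a k => (if k = a then γ else 0) - TT s k a with hQ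
  have hQcont : ∀ a : Fin n, Continuous fun s => Q s a := by
    intro a
    apply continuous_pi
    intro k
    simp only [hQ]
    apply Continuous.sub continuous_const
    simp only [hTT]
    by_cases h : k < a
    · simp only [dif_pos h]
      exact continuous_const.mul (continuous_apply _)
    · simp only [dif_neg h]
      exact continuous_const
  have hkey : ∀ (s : Fin D → ℝ), (∀ idx, s idx ∈ Set.Icc (0:ℝ) 1) → ∀ (pr : ι),
      (s (E pr) = 0 → ν (Q s pr.1.1 - Q s pr.1.2) ≤ 1) ∧
      (s (E pr) = 1 → 1 ≤ ν (Q s pr.1.1 - Q s pr.1.2)) := by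
    intro s hs pr
    obtain ⟨⟨i, j⟩, hij⟩ := pr
    have hTTb : ∀ k a, 0 ≤ TT s k a ∧ TT s k a ≤ β := by
      intro k a
      simp only [hTT]
      split
      · next h =>
          have h1 := (hs (E ⟨(k,a),h⟩)).1
          have h2 := (hs (E ⟨(k,a),h⟩)).2
          constructor
          · exact mul_nonneg hβ.le h1
          · nlinarith
      · exact ⟨le_refl 0, hβ.le⟩
    have hDi : (Q s i - Q s j) i = γ + β * s (E ⟨(i,j),hij⟩) := by
      simp only [Pi.sub_apply, hQ]
      rw [if_pos trivial, if_neg (ne_of_lt hij)]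
      simp only [hTT]
      rw [dif_neg (lt_irrefl i), dif_pos hij]
      ring
    have hDj : (Q s i - Q s j) j = -γ := by
      simp only [Pi.sub_apply, hQ]
      rw [if_neg (ne_of_gt hij), if_pos trivial]
      simp only [hTT]
      rw [dif_neg (lt_asymm hij), dif_neg (lt_irrefl j)]
      ring
    have hDk : ∀ k, k ≠ i → k ≠ j → (Q s i - Q s j) k = TT s k j - TT s k i := by
      intro k hki hkj
      simp only [Pi.sub_apply, hQ]
      rw [if_neg hki, if_neg hkj]
      ring
    constructor
    · intro h0
      have hlp1 : lpNorm p (Q s i - Q s j) ≤ 1 := by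
        apply hsum_ub _ i j (ne_of_lt hij)
        · rw [hDi, h0, mul_zero, add_zero, abs_of_pos hγ]
        · rw [hDj, abs_neg, abs_of_pos hγ]
        · intro k hki hkj
          rw [hDk k hki hkj]
          have h1 := hTTb k j
          have h2 := hTTb k i
          rw [abs_le]
          constructor <;> linarith
      linarith [h_le (Q s i - Q s j)]
    · intro h1
      have hlp2 : R ≤ lpNorm p (Q s i - Q s j) := by
        apply hsum_lb _ i j (ne_of_lt hij)
        · rw [hDi, h1, mul_one, abs_of_pos (by linarith)]
        · rw [hDj, abs_neg, abs_of_pos hγ]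
      have h2 := h_ge (Q s i - Q s j)
      have h3 : R * 1 ≤ R * ν (Q s i - Q s j) := by
        rw [mul_one]
        linarith
      exact le_of_mul_le_mul_left h3 hR0
  obtain ⟨s, hscube, hsz⟩ := PMSperner.poincare_miranda D
    (fun s idx => 1 - ν (Q s (E.symm idx).1.1 - Q s (E.symm idx).1.2))
    (by
      intro idx
      show Continuous fun s => 1 - ν (Q s (E.symm idx).1.1 - Q s (E.symm idx).1.2)
      apply Continuous.sub continuous_const
      exact hν_cont.comp ((hQcont (E.symm idx).1.1).sub (hQcont (E.symm idx).1.2)))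
    (by
      intro x hx idx hidx0
      have h := (hkey x hx (E.symm idx)).1 (by rw [Equiv.apply_symm_apply]; exact hidx0)
      show (0:ℝ) ≤ 1 - ν (Q x (E.symm idx).1.1 - Q x (E.symm idx).1.2)
      linarith)
    (by
      intro x hx idx hidx1
      have h := (hkey x hx (E.symm idx)).2 (by rw [Equiv.apply_symm_apply]; exact hidx1)
      show 1 - ν (Q x (E.symm idx).1.1 - Q x (E.symm idx).1.2) ≤ (0:ℝ)
      linarith)
  refine ⟨Q s, ?_⟩
  intro i j hij
  have h := hsz (E ⟨(i,j),hij⟩)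
  simp only [Equiv.symm_apply_apply] at h
  have h2 : (1:ℝ) - ν (Q s i - Q s j) = 0 := h
  linarith
end

section
/- Fix p ∈ (1, ∞) and define R(p, n) = sup_{θ>0} ((1 + (1 + θ)^p) / (2 + (n − 2)·θ^p))^{1/p} for integers n > 2. Then R(p, n) − 1 is asymptotically equivalent to ((p − 1)/(2p))·n^{−1/(p−1)} as n → ∞; that is, lim_{n→∞} (R(p, n) − 1) / (((p − 1)/(2p))·n^{−1/(p−1)}) = 1. -/
/-!
Write `M = n - 2` and `t = M ^ (-1/(p-1))`, the point where `M t^p = t`. Evaluating at `θ = t`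
gives `R^p ≥ 1 + ((1+t)^p - 1 - t)/(2+t) = 1 + (p-1)t/2 + o(t)`. Conversely, for `θ ≤ δ` convexity
bounds `(1+θ)^p` by its chord `1 + c_δ θ`, and Young's inequality
`c_δ θ ≤ M θ^p + (p-1)(c_δ/p)^(p/(p-1)) t` absorbs the linear term into the denominator; for
`θ > δ` one has `(1+θ)^p ≤ M θ^p` as soon as `(1+δ⁻¹)^p ≤ M`. Choosing `δ → 0` with
`(1+δ⁻¹)^p = M` makes `c_δ → p`, hence `R^p ≤ 1 + (p-1)t/2 · (1 + o(1))`. Taking `p`-th roots,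
`R - 1 ∼ (p-1)t/(2p) ∼ ((p-1)/(2p)) n^(-1/(p-1))`.
-/

/-- `R(p, n) = sup_{θ>0} ((1 + (1 + θ)^p) / (2 + (n - 2) θ^p))^{1/p}`. -/
noncomputable def Rpn (p : ℝ) (n : ℕ) : ℝ :=
  sSup {r : ℝ | ∃ θ : ℝ, 0 < θ ∧
    r = ((1 + (1 + θ) ^ p) / (2 + ((n : ℝ) - 2) * θ ^ p)) ^ (1 / p)}

open Real Filter Topology Asymptotics

noncomputable def rpnRatio (p M θ : ℝ) : ℝ :=
  (1 + (1 + θ) ^ p) / (2 + M * θ ^ p)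

theorem rpow_mem_upperBounds_Rpn_set {p B : ℝ} {n : ℕ} (hp : 0 < p) (hn : 2 ≤ n)
    (hB : ∀ θ > 0, rpnRatio p (n - 2) θ ≤ B) :
    B ^ (1 / p) ∈ upperBounds {r : ℝ | ∃ θ : ℝ, 0 < θ ∧
      r = ((1 + (1 + θ) ^ p) / (2 + ((n : ℝ) - 2) * θ ^ p)) ^ (1 / p)} := by
  rintro r ⟨θ, hθ, rfl⟩
  have hn' : (0 : ℝ) ≤ n - 2 := by
    rw [sub_nonneg]
    exact_mod_cast hn
  exact rpow_le_rpow (by positivity) (hB θ hθ) (by positivity)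

theorem Rpn_le {p B : ℝ} {n : ℕ} (hp : 0 < p) (hn : 2 ≤ n)
    (hB : ∀ θ > 0, rpnRatio p (n - 2) θ ≤ B) : Rpn p n ≤ B ^ (1 / p) :=
  csSup_le ⟨_, 1, one_pos, rfl⟩ (rpow_mem_upperBounds_Rpn_set hp hn hB)

theorem rpnRatio_rpow_le_Rpn {p B θ : ℝ} {n : ℕ} (hp : 0 < p) (hn : 2 ≤ n)
    (hB : ∀ θ > 0, rpnRatio p (n - 2) θ ≤ B) (hθ : 0 < θ) :
    rpnRatio p (n - 2) θ ^ (1 / p) ≤ Rpn p n :=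
  le_csSup ⟨_, rpow_mem_upperBounds_Rpn_set hp hn hB⟩ ⟨θ, hθ, rfl⟩

theorem rpnRatio_eq_of_mul_rpow_eq {p M t : ℝ} (ht : 0 < t) (hMt : M * t ^ p = t) :
    rpnRatio p M t = 1 + ((1 + t) ^ p - 1 - t) / (2 + t) := by
  rw [rpnRatio, hMt]
  field_simp
  ring

theorem mul_le_rpow_add {p c s : ℝ} (hp : 1 < p) (hc : 0 ≤ c) (hs : 0 ≤ s) :
    c * s ≤ s ^ p + (p - 1) * (c / p) ^ (p / (p - 1)) := by
  have hp0 : 0 < p := by linarith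
  have hp1 : p - 1 ≠ 0 := by linarith
  have hpq : p.HolderConjugate (p / (p - 1)) := (Real.holderConjugate_iff_eq_conjExponent hp).2 rfl
  have young := Real.young_inequality_of_nonneg (mul_nonneg hs (rpow_nonneg hp0.le (1 / p)))
    (mul_nonneg hc (rpow_nonneg hp0.le (-(1 / p)))) hpq
  have hprod : s * p ^ (1 / p) * (c * p ^ (-(1 / p))) = c * s := by
    rw [mul_mul_mul_comm, ← rpow_add hp0]
    simp [mul_comm]
  have hfirst : (s * p ^ (1 / p)) ^ p / p = s ^ p := by
    rw [mul_rpow hs (rpow_nonneg hp0.le _), ← rpow_mul hp0.le, one_div_mul_cancel hp0.ne',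
      rpow_one, mul_div_cancel_right₀ _ hp0.ne']
  have hsecond : (c * p ^ (-(1 / p))) ^ (p / (p - 1)) / (p / (p - 1)) =
      (p - 1) * (c / p) ^ (p / (p - 1)) := by
    rw [mul_rpow hc (rpow_nonneg hp0.le _), ← rpow_mul hp0.le, div_rpow hc hp0.le]
    have : -(1 / p) * (p / (p - 1)) = 1 - p / (p - 1) := by field_simp; ring
    rw [this, rpow_sub hp0, rpow_one]
    field_simp
  rwa [hprod, hfirst, hsecond] at young

theorem one_add_rpow_le_one_add_mul {p δ θ : ℝ} (hp : 1 ≤ p) (hθ : 0 < θ) (hθδ : θ ≤ δ) :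
    (1 + θ) ^ p ≤ 1 + ((1 + δ) ^ p - 1) / δ * θ := by
  have hsec := (convexOn_rpow hp).secant_mono (a := 1) (x := 1 + θ) (y := 1 + δ)
    (by norm_num) (by simp; linarith) (by simp; linarith) (by linarith) (by linarith)
    (by linarith)
  simp only [one_rpow, add_sub_cancel_left] at hsec
  rw [div_le_iff₀ hθ] at hsec
  linarith

theorem rpnRatio_le {p M t δ θ : ℝ} (hp : 1 < p) (ht : 0 < t) (hMt : M * t ^ p = t)
    (hδ : 0 < δ) (hMδ : (1 + δ⁻¹) ^ p ≤ M) (hθ : 0 < θ) :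
    rpnRatio p M θ ≤ 1 + (p - 1) / 2 * t * ((((1 + δ) ^ p - 1) / δ) / p) ^ (p / (p - 1)) := by
  set c := ((1 + δ) ^ p - 1) / δ
  set K := (p - 1) * (c / p) ^ (p / (p - 1))
  have hc : 0 ≤ c := div_nonneg (sub_nonneg.2 (one_le_rpow (by linarith) (by linarith))) hδ.le
  have hK : 0 ≤ K := mul_nonneg (by linarith) (rpow_nonneg (div_nonneg hc (by linarith)) _)
  have hMθ : 0 ≤ M * θ ^ p :=
    mul_nonneg ((rpow_nonneg (by positivity) _).trans hMδ) (rpow_nonneg hθ.le _)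
  -- the denominator is at least `2`, so an extra `K t` in the numerator costs a factor `1 + K t / 2`
  suffices h : 1 + (1 + θ) ^ p ≤ 2 + M * θ ^ p + K * t by
    rw [rpnRatio, div_le_iff₀ (by positivity)]
    nlinarith [mul_nonneg (mul_nonneg hMθ hK) ht.le]
  rcases le_or_gt θ δ with hθδ | hδθ
  · have hscale : t * (θ / t) ^ p = M * θ ^ p := by
      have htp : t ^ p ≠ 0 := (rpow_pos_of_pos ht p).ne'
      rw [div_rpow hθ.le ht.le]
      field_simp
      linear_combination -hMt
    have hyoung : c * θ ≤ M * θ ^ p + K * t := by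
      calc c * θ = t * (c * (θ / t)) := by field_simp
        _ ≤ t * ((θ / t) ^ p + K) :=
          mul_le_mul_of_nonneg_left (mul_le_rpow_add hp hc (by positivity)) ht.le
        _ = M * θ ^ p + K * t := by rw [mul_add, hscale, mul_comm t]
    linarith [one_add_rpow_le_one_add_mul hp.le hθ hθδ]
  · have h1 : 1 + θ ≤ (1 + δ⁻¹) * θ := by
      rw [add_mul, one_mul, inv_mul_eq_div, add_comm]
      gcongr
      exact (one_le_div hδ).2 hδθ.le
    have hlarge : (1 + θ) ^ p ≤ M * θ ^ p :=
      calc (1 + θ) ^ p ≤ ((1 + δ⁻¹) * θ) ^ p := by gcongr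
        _ = (1 + δ⁻¹) ^ p * θ ^ p := mul_rpow (by positivity) hθ.le
        _ ≤ M * θ ^ p := by gcongr
    nlinarith [mul_nonneg hK ht.le]

theorem mul_rpow_rpow_neg_one_div_sub_one {p M : ℝ} (hp : p ≠ 1) (hM : 0 < M) :
    M * (M ^ (-(1 / (p - 1)))) ^ p = M ^ (-(1 / (p - 1))) := by
  have hp1 : p - 1 ≠ 0 := sub_ne_zero.2 hp
  rw [← rpow_mul hM.le]
  nth_rw 1 [← rpow_one M]
  rw [← rpow_add hM]
  congr 1
  field_simp
  ring

theorem Rpn_mem_Icc {p t δ : ℝ} {n : ℕ} (hp : 1 < p) (ht : 0 < t)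
    (hnt : ((n : ℝ) - 2) * t ^ p = t) (hδ : 0 < δ) (hnδ : (1 + δ⁻¹) ^ p ≤ n - 2) :
    Rpn p n ∈ Set.Icc ((1 + ((1 + t) ^ p - 1 - t) / (2 + t)) ^ (1 / p))
      ((1 + (p - 1) / 2 * t * ((((1 + δ) ^ p - 1) / δ) / p) ^ (p / (p - 1))) ^ (1 / p)) := by
  have hp0 : 0 < p := by linarith
  have hn : 2 ≤ n := by
    have : (2 : ℝ) ≤ n := by linarith [rpow_nonneg (by positivity : (0 : ℝ) ≤ 1 + δ⁻¹) p]
    exact_mod_cast this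
  have hB := fun θ (hθ : 0 < θ) => rpnRatio_le hp ht hnt hδ hnδ hθ
  refine ⟨?_, Rpn_le hp0 hn hB⟩
  rw [← rpnRatio_eq_of_mul_rpow_eq ht hnt]
  exact rpnRatio_rpow_le_Rpn hp0 hn hB ht

section Asymptotics

variable {α : Type*} {l : Filter α} {a : α → ℝ}

theorem isLittleO_one_add_rpow_sub_one_sub_mul (r : ℝ) (ha : Tendsto a l (𝓝 0)) :
    (fun x => (1 + a x) ^ r - 1 - r * a x) =o[l] a := by
  have hderiv : HasDerivAt (fun y : ℝ => (1 + y) ^ r) r 0 := by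
    simpa using ((hasDerivAt_id (0 : ℝ)).const_add 1).rpow_const (p := r) (by simp)
  simpa [Function.comp_def, mul_comm] using
    (hasDerivAt_iff_isLittleO.1 hderiv).comp_tendsto ha

theorem isEquivalent_one_add_rpow_sub_one_sub_mul {r s : ℝ} (hrs : r ≠ s)
    (ha : Tendsto a l (𝓝 0)) :
    (fun x => (1 + a x) ^ r - 1 - s * a x) ~[l] fun x => (r - s) * a x := by
  refine IsLittleO.isEquivalent ((isLittleO_const_mul_right_iff (sub_ne_zero.2 hrs)).2 ?_)
  refine (isLittleO_one_add_rpow_sub_one_sub_mul r ha).congr_left fun x => ?_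
  simp only [Pi.sub_apply]
  ring

theorem tendsto_one_add_rpow_sub_one_div (r : ℝ) (ha : Tendsto a l (𝓝 0))
    (ha' : ∀ᶠ x in l, a x ≠ 0) :
    Tendsto (fun x => ((1 + a x) ^ r - 1) / a x) l (𝓝 r) := by
  have := (isLittleO_one_add_rpow_sub_one_sub_mul r ha).tendsto_div_nhds_zero.add_const r
  rw [zero_add] at this
  refine this.congr' ?_
  filter_upwards [ha'] with x hx
  field_simp
  ring

theorem isEquivalent_one_add_rpow_sub_one {r : ℝ} (hr : r ≠ 0) {b : α → ℝ} (hab : a ~[l] b)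
    (hb : Tendsto b l (𝓝 0)) :
    (fun x => (1 + a x) ^ r - 1) ~[l] fun x => r * b x := by
  have ha : Tendsto a l (𝓝 0) := hab.symm.tendsto_nhds hb
  have := isEquivalent_one_add_rpow_sub_one_sub_mul (s := 0) hr ha
  simp only [zero_mul, sub_zero] at this
  exact this.trans ((IsEquivalent.refl (u := fun _ => r)).mul hab)

theorem isEquivalent_one_add_rpow_sub_one_sub_div_two_add {p : ℝ} (hp : p ≠ 1)
    {t : α → ℝ} (ht : Tendsto t l (𝓝 0)) :
    (fun x => ((1 + t x) ^ p - 1 - t x) / (2 + t x)) ~[l] fun x => (p - 1) / 2 * t x := by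
  have hnum := isEquivalent_one_add_rpow_sub_one_sub_mul (s := 1) hp ht
  have hden : (fun x => 2 + t x) ~[l] fun _ => (2 : ℝ) :=
    (isEquivalent_const_iff_tendsto two_ne_zero).2 (by simpa using ht.const_add 2)
  simp only [one_mul] at hnum
  refine (hnum.div hden).trans (EventuallyEq.isEquivalent (Eventually.of_forall fun x => ?_))
  simp only [Pi.div_apply]
  ring

theorem isEquivalent_mul_slope_div_rpow {p : ℝ} (hp : p ≠ 0) {δ : α → ℝ}
    (hδ : Tendsto δ l (𝓝 0)) (hδ' : ∀ᶠ x in l, δ x ≠ 0) (t : α → ℝ) :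
    (fun x => t x * (((1 + δ x) ^ p - 1) / δ x / p) ^ (p / (p - 1))) ~[l] t := by
  have hslope : Tendsto (fun x => (((1 + δ x) ^ p - 1) / δ x / p) ^ (p / (p - 1))) l (𝓝 1) := by
    have := ((tendsto_one_add_rpow_sub_one_div p hδ hδ').div_const p).rpow_const
      (p := p / (p - 1)) (Or.inl (by simp [hp]))
    rwa [div_self hp, one_rpow] at this
  exact (IsEquivalent.refl.mul ((isEquivalent_const_iff_tendsto one_ne_zero).2 hslope)).congr_right
    (Eventually.of_forall fun x => by simp)

theorem isEquivalent_of_le_of_le {f g h u : α → ℝ} (hg : g ~[l] u) (hh : h ~[l] u)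
    (hgf : g ≤ᶠ[l] f) (hfh : f ≤ᶠ[l] h) (hu : ∀ᶠ x in l, 0 < u x) : f ~[l] u := by
  have hu' : ∀ᶠ x in l, u x ≠ 0 := hu.mono fun _ hx => hx.ne'
  rw [isEquivalent_iff_tendsto_one hu'] at hg hh ⊢
  refine tendsto_of_tendsto_of_tendsto_of_le_of_le' hg hh ?_ ?_
  · filter_upwards [hgf, hu] with x hx hux using div_le_div_of_nonneg_right hx hux.le
  · filter_upwards [hfh, hu] with x hx hux using div_le_div_of_nonneg_right hx hux.le

theorem exists_tendsto_zero_one_add_inv_rpow_eq {p : ℝ} (hp : 0 < p) {M : α → ℝ}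
    (hM : Tendsto M l atTop) :
    ∃ δ : α → ℝ, Tendsto δ l (𝓝 0) ∧ ∀ᶠ x in l, 0 < δ x ∧ (1 + (δ x)⁻¹) ^ p = M x := by
  have hMp : Tendsto (fun x => M x ^ (1 / p) - 1) l atTop :=
    tendsto_atTop_add_const_right _ _ ((tendsto_rpow_atTop (by positivity)).comp hM)
  refine ⟨fun x => (M x ^ (1 / p) - 1)⁻¹, hMp.inv_tendsto_atTop, ?_⟩
  filter_upwards [hMp.eventually_gt_atTop 0, hM.eventually_ge_atTop 0] with x hx hMx
  refine ⟨inv_pos.2 hx, ?_⟩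
  rw [inv_inv, add_sub_cancel, ← rpow_mul hMx, one_div_mul_cancel hp.ne', rpow_one]

end Asymptotics

theorem isEquivalent_natCast_sub_rpow (c r : ℝ) :
    (fun n : ℕ => ((n : ℝ) - c) ^ r) ~[atTop] fun n => (n : ℝ) ^ r := by
  have h : (fun n : ℕ => (n : ℝ) - c) ~[atTop] fun n => (n : ℝ) := by
    simpa [sub_eq_add_neg] using IsEquivalent.refl.add_const_of_norm_tendsto_atTop (c := -c)
      (tendsto_norm_atTop_atTop.comp tendsto_natCast_atTop_atTop)
  exact h.rpow (fun n => Nat.cast_nonneg n)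

theorem isEquivalent_Rpn_sub_one {p : ℝ} (hp : 1 < p) :
    (fun n => Rpn p n - 1) ~[atTop]
      fun n : ℕ => 1 / p * ((p - 1) / 2 * ((n : ℝ) - 2) ^ (-(1 / (p - 1)))) := by
  have hp0 : 0 < p := by linarith
  have hM : Tendsto (fun n : ℕ => (n : ℝ) - 2) atTop atTop :=
    tendsto_atTop_add_const_right _ _ tendsto_natCast_atTop_atTop
  set t : ℕ → ℝ := fun n => ((n : ℝ) - 2) ^ (-(1 / (p - 1)))
  have ht0 : Tendsto t atTop (𝓝 0) :=
    (tendsto_rpow_neg_atTop (one_div_pos.2 (sub_pos.2 hp))).comp hM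
  have hct0 : Tendsto (fun n => (p - 1) / 2 * t n) atTop (𝓝 0) := by
    simpa using ht0.const_mul ((p - 1) / 2)
  obtain ⟨δ, hδ0, hδ⟩ := exists_tendsto_zero_one_add_inv_rpow_eq hp0 hM
  have hbounds : ∀ᶠ n in atTop,
      Rpn p n ∈ Set.Icc ((1 + ((1 + t n) ^ p - 1 - t n) / (2 + t n)) ^ (1 / p))
        ((1 + (p - 1) / 2 * t n * (((1 + δ n) ^ p - 1) / δ n / p) ^ (p / (p - 1))) ^ (1 / p)) := by
    filter_upwards [hδ, hM.eventually_gt_atTop 0] with n ⟨hδn, hnδ⟩ hn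
    exact Rpn_mem_Icc hp (rpow_pos_of_pos hn _) (mul_rpow_rpow_neg_one_div_sub_one hp.ne' hn)
      hδn hnδ.le
  have hlower := isEquivalent_one_add_rpow_sub_one (one_div_ne_zero hp0.ne')
    (isEquivalent_one_add_rpow_sub_one_sub_div_two_add hp.ne' ht0) hct0
  have hupper := isEquivalent_one_add_rpow_sub_one (one_div_ne_zero hp0.ne')
    (isEquivalent_mul_slope_div_rpow hp0.ne' hδ0 (hδ.mono fun n h => h.1.ne') _) hct0
  refine isEquivalent_of_le_of_le hlower hupper (hbounds.mono fun n h => sub_le_sub_right h.1 1)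
    (hbounds.mono fun n h => sub_le_sub_right h.2 1) ?_
  filter_upwards [hM.eventually_gt_atTop 0] with n hn
  have := sub_pos.2 hp
  positivity

/-- For fixed `p ∈ (1, ∞)`, one has `R(p, n) - 1 ∼ ((p-1)/(2p)) n^{-1/(p-1)}` as
`n → ∞`, i.e. the ratio of the two sides tends to `1`. -/
theorem Rpn_sub_one_asymptotic (p : ℝ) (hp : 1 < p) :
    Filter.Tendsto
      (fun n : ℕ =>
        (Rpn p n - 1) / (((p - 1) / (2 * p)) * (n : ℝ) ^ (-(1 / (p - 1)))))
      Filter.atTop (nhds 1) := by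
  have hR := (isEquivalent_Rpn_sub_one hp).trans
    (IsEquivalent.refl.mul (IsEquivalent.refl.mul (isEquivalent_natCast_sub_rpow 2 _)))
  have hne : ∀ᶠ n : ℕ in atTop, (p - 1) / (2 * p) * (n : ℝ) ^ (-(1 / (p - 1))) ≠ 0 := by
    filter_upwards [eventually_gt_atTop 0] with n hn
    have : (0 : ℝ) < n := by exact_mod_cast hn
    have := sub_pos.2 hp
    positivity
  refine (isEquivalent_iff_tendsto_one hne).1 (hR.congr_right (Eventually.of_forall fun n => ?_))
  simp only [Pi.mul_apply]
  ring
end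

section
/- Let n > 2, p ∈ (1, ∞), R ≥ 1, and suppose β, γ > 0 satisfy (γ + β)^p + γ^p ≥ R^p and (n − 2)·β^p + 2·γ^p ≤ 1. Let ‖·‖ be a norm on ℝ^n satisfying ‖x‖ ≤ ‖x‖_p ≤ R‖x‖ for all x ∈ ℝ^n. Let I = {(i, j) : 1 ≤ i < j ≤ n}, N = n(n−1)/2, and for ε = (ε_{i,j}) ∈ [0, β]^N define points p₁(ε), …, p_n(ε) in ℝ^n by p₁(ε) = (−γ, 0, …, 0); p_j(ε) = (ε_{1,j}, …, ε_{j−1,j}, −γ, 0, …, 0) for 2 ≤ j ≤ n − 1; and p_n(ε) = (ε_{1,n}, …, ε_{n−1,n}, −γ). Then for every ε ∈ [0, β]^N and every (i, j) ∈ I, the quantity φ_{i,j}(ε) := 1 + ε_{i,j} − ‖p_i(ε) − p_j(ε)‖ satisfies 0 ≤ φ_{i,j}(ε) ≤ β. -/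
/-- The points `p₁(ε), …, p_n(ε)` of the paper, with `0`-based indexing: for
`j : Fin n`, the `k`-th coordinate of `qPoint γ ε j` is `ε_{k,j}` if `k < j`,
`-γ` if `k = j`, and `0` otherwise.  (So `qPoint γ ε 0 = (-γ,0,…,0)`,
`qPoint γ ε j = (ε_{1,j},…,ε_{j-1,j},-γ,0,…,0)` in `1`-based terms, and
`qPoint γ ε (n-1) = (ε_{1,n},…,ε_{n-1,n},-γ)`.) -/
def qPoint {n : ℕ} (γ : ℝ) (ε : Fin n → Fin n → ℝ) (j : Fin n) : Fin n → ℝ :=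
  fun k => if k < j then ε k j else if k = j then -γ else 0

lemma rpow_shift_le (p : ℝ) (hp : 1 ≤ p) {γ ε : ℝ} (hγ0 : 0 ≤ γ) (hγ1 : γ ≤ 1)
    (hε : 0 ≤ ε) : (γ + ε) ^ p - γ ^ p ≤ (1 + ε) ^ p - 1 := by
  have hdiff : ∀ x : ℝ, HasDerivAt (fun x : ℝ => (x + ε) ^ p - x ^ p)
      (p * (x + ε) ^ (p - 1) * 1 - p * x ^ (p - 1)) x := by
    intro x
    exact ((Real.hasDerivAt_rpow_const (Or.inr hp)).comp x
      ((hasDerivAt_id x).add_const ε)).sub (Real.hasDerivAt_rpow_const (Or.inr hp))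
  have hmono : MonotoneOn (fun x : ℝ => (x + ε) ^ p - x ^ p) (Set.Ici 0) := by
    apply monotoneOn_of_deriv_nonneg (convex_Ici 0)
    · exact fun x _ => (hdiff x).differentiableAt.continuousAt.continuousWithinAt
    · exact fun x _ => (hdiff x).differentiableAt.differentiableWithinAt
    · intro x hx
      rw [interior_Ici] at hx
      rw [(hdiff x).deriv]
      have h1 : x ^ (p - 1) ≤ (x + ε) ^ (p - 1) :=
        Real.rpow_le_rpow (le_of_lt hx) (by linarith) (by linarith)
      have hp0 : (0:ℝ) ≤ p := by linarith
      nlinarith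
  have := hmono (Set.mem_Ici.mpr hγ0) (Set.mem_Ici.mpr zero_le_one) hγ1
  simpa [Real.one_rpow] using this

/-- Let `n > 2`, `1 < p < ∞`, `R ≥ 1`, and `β, γ > 0` with `(γ + β)^p + γ^p ≥ R^p` and
`(n - 2) β^p + 2 γ^p ≤ 1`, and let `ν` be a norm on `ℝⁿ` (given by its triangle
inequality and absolute homogeneity) with `ν x ≤ ‖x‖_p ≤ R ν x` for all `x`.  Then for
every `ε ∈ [0, β]^{n(n-1)/2}` and every pair `i < j`, the quantity
`φ_{i,j}(ε) = 1 + ε_{i,j} - ν (p_i(ε) - p_j(ε))` lies in `[0, β]`. -/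
theorem phi_mem_Icc_lp (n : ℕ) (hn : 2 < n) (p : ℝ) (hp : 1 < p)
    (R : ℝ) (hR : 1 ≤ R) (β γ : ℝ) (hβ : 0 < β) (hγ : 0 < γ)
    (hcond1 : R ^ p ≤ (γ + β) ^ p + γ ^ p)
    (hcond2 : ((n : ℝ) - 2) * β ^ p + 2 * γ ^ p ≤ 1)
    (ν : (Fin n → ℝ) → ℝ)
    (hν_add : ∀ x y : Fin n → ℝ, ν (x + y) ≤ ν x + ν y)
    (hν_smul : ∀ (a : ℝ) (x : Fin n → ℝ), ν (a • x) = |a| * ν x)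
    (h_le : ∀ x : Fin n → ℝ, ν x ≤ lpNorm p x)
    (h_ge : ∀ x : Fin n → ℝ, lpNorm p x ≤ R * ν x)
    (ε : Fin n → Fin n → ℝ)
    (hε : ∀ i j : Fin n, i < j → ε i j ∈ Set.Icc (0 : ℝ) β) :
    ∀ i j : Fin n, i < j →
      0 ≤ 1 + ε i j - ν (qPoint γ ε i - qPoint γ ε j) ∧
      1 + ε i j - ν (qPoint γ ε i - qPoint γ ε j) ≤ β := by
  have hp0 : (0:ℝ) < p := lt_trans one_pos hp
  have hp0' : p ≠ 0 := ne_of_gt hp0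
  have hip0 : (0:ℝ) ≤ 1 / p := by positivity
  have hR0 : (0:ℝ) < R := lt_of_lt_of_le one_pos hR
  -- γ ≤ 1
  have hβp : (0:ℝ) ≤ β ^ p := Real.rpow_nonneg hβ.le p
  have hn2 : (0:ℝ) ≤ (n:ℝ) - 2 := by
    have : (2:ℝ) ≤ (n:ℝ) := by exact_mod_cast hn.le
    linarith
  have hγ1 : γ ≤ 1 := by
    by_contra h
    push_neg at h
    have : 1 < γ ^ p := Real.one_lt_rpow_iff_of_pos hγ |>.mpr (Or.inl ⟨h, hp0⟩)
    nlinarith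
  intro i j hij
  obtain ⟨hε0, hεβ⟩ := hε i j hij
  set d : Fin n → ℝ := qPoint γ ε i - qPoint γ ε j with hd
  have hdi : d i = -(γ + ε i j) := by
    simp [hd, qPoint, hij]; ring
  have hdj : d j = γ := by
    simp [hd, qPoint, lt_asymm hij, hij.ne']
  have hdk : ∀ k : Fin n, k ≠ i → k ≠ j → |d k| ≤ β := by
    intro k hki hkj
    rcases lt_or_gt_of_ne hki with hki' | hki'
    · have hkj' : k < j := hki'.trans hij
      have hk : d k = ε k i - ε k j := by simp [hd, qPoint, hki', hkj']
      rw [hk, abs_sub_le_iff]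
      obtain ⟨h1, h2⟩ := hε k i hki'
      obtain ⟨h3, h4⟩ := hε k j hkj'
      constructor <;> linarith
    · rcases lt_or_gt_of_ne hkj with hkj' | hkj'
      · have hk : d k = -ε k j := by
          simp [hd, qPoint, not_lt_of_gt hki', hki, hkj']
        rw [hk, abs_neg, abs_of_nonneg (hε k j hkj').1]
        exact (hε k j hkj').2
      · have hk : d k = 0 := by
          simp [hd, qPoint, not_lt_of_gt hki', hki, not_lt_of_gt hkj', hkj]
        rw [hk]; simpa using hβ.le
  -- the unit vector
  set e : Fin n → ℝ := Pi.single i 1 with he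
  have hee : lpNorm p e = 1 := by
    unfold lpNorm
    have h1 : ∀ k : Fin n, |e k| ^ p = if k = i then 1 else 0 := by
      intro k
      by_cases h : k = i <;>
        simp [he, Pi.single_apply, h, Real.zero_rpow hp0', Real.one_rpow]
    have h2 : (∑ k, |e k| ^ p) = ∑ k, if k = i then (1:ℝ) else 0 :=
      Finset.sum_congr rfl fun k _ => h1 k
    rw [h2]
    simp
  -- the perturbed point y
  set y : Fin n → ℝ := Function.update d i (-(γ + β)) with hy
  have hyi : y i = -(γ + β) := Function.update_self i _ d
  have hyj : y j = γ := by
    rw [hy, Function.update_of_ne hij.ne', hdj]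
  have hSy : R ^ p ≤ ∑ k, |y k| ^ p := by
    have hge : ∑ k ∈ ({i, j} : Finset (Fin n)), |y k| ^ p ≤ ∑ k, |y k| ^ p :=
      Finset.sum_le_sum_of_subset_of_nonneg (Finset.subset_univ _)
        (fun k _ _ => Real.rpow_nonneg (abs_nonneg _) p)
    rw [Finset.sum_pair hij.ne] at hge
    have h1 : |y i| = γ + β := by rw [hyi, abs_neg, abs_of_pos (by linarith)]
    have h2 : |y j| = γ := by rw [hyj, abs_of_pos hγ]
    rw [h1, h2] at hge
    linarith
  have hlpy : R ≤ lpNorm p y := by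
    unfold lpNorm
    rw [one_div]
    have h3 := Real.rpow_le_rpow (Real.rpow_nonneg hR0.le p) hSy
      (by positivity : (0:ℝ) ≤ p⁻¹)
    rwa [Real.rpow_rpow_inv hR0.le hp0'] at h3
  have hνy : 1 ≤ ν y := by
    have := h_ge y
    nlinarith
  -- upper bound: ν d ≥ 1 - (β - ε i j)
  have hyd : y = d + (ε i j - β) • e := by
    funext k
    by_cases hk : k = i
    · subst hk
      simp [hy, Function.update_self, hdi, he, Pi.single_apply]
      ring
    · simp [hy, Function.update_of_ne hk, he, Pi.single_apply, hk]
  have hνe : ν e ≤ 1 := hee ▸ h_le _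
  have hνe0 : 0 ≤ ν e := by
    have h1 := h_ge e
    rw [hee] at h1
    nlinarith
  have habs : |ε i j - β| = β - ε i j := by
    rw [abs_of_nonpos (by linarith)]; ring
  have hupper : 1 + ε i j - ν d ≤ β := by
    have h1 : ν y ≤ ν d + ν ((ε i j - β) • e) := hyd ▸ hν_add _ _
    rw [hν_smul, habs] at h1
    have h2 : (β - ε i j) * ν e ≤ (β - ε i j) * 1 :=
      mul_le_mul_of_nonneg_left hνe (by linarith)
    linarith
  -- lower bound: ν d ≤ 1 + ε i j
  have hS : ∑ k, |d k| ^ p ≤ (1 + ε i j) ^ p := by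
    have hsplit : ∑ k ∈ Finset.univ \ {i, j}, |d k| ^ p + ∑ k ∈ ({i, j} : Finset (Fin n)), |d k| ^ p
        = ∑ k, |d k| ^ p := Finset.sum_sdiff (Finset.subset_univ _)
    have hpair : ∑ k ∈ ({i, j} : Finset (Fin n)), |d k| ^ p = (γ + ε i j) ^ p + γ ^ p := by
      rw [Finset.sum_pair hij.ne, hdi, hdj, abs_neg, abs_of_pos (by linarith),
        abs_of_pos hγ]
    have hcard : (Finset.univ \ ({i, j} : Finset (Fin n))).card = n - 2 := by
      rw [Finset.card_sdiff_of_subset (Finset.subset_univ _), Finset.card_pair hij.ne,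
        Finset.card_univ, Fintype.card_fin]
    have hrest : ∑ k ∈ Finset.univ \ {i, j}, |d k| ^ p ≤ ((n:ℝ) - 2) * β ^ p := by
      have h1 : ∀ k ∈ Finset.univ \ ({i, j} : Finset (Fin n)), |d k| ^ p ≤ β ^ p := by
        intro k hk
        simp only [Finset.mem_sdiff, Finset.mem_insert, Finset.mem_singleton] at hk
        push_neg at hk
        exact Real.rpow_le_rpow (abs_nonneg _) (hdk k hk.2.1 hk.2.2) hp0.le
      calc ∑ k ∈ Finset.univ \ {i, j}, |d k| ^ p
          ≤ (Finset.univ \ ({i, j} : Finset (Fin n))).card • (β ^ p) :=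
            Finset.sum_le_card_nsmul _ _ _ h1
        _ = ((n:ℝ) - 2) * β ^ p := by
            rw [hcard, nsmul_eq_mul, Nat.cast_sub hn.le]
            norm_num
    have hshift : (γ + ε i j) ^ p - γ ^ p ≤ (1 + ε i j) ^ p - 1 :=
      rpow_shift_le p hp.le hγ.le hγ1 hε0
    linarith [hsplit, hpair]
  have hlpd : lpNorm p d ≤ 1 + ε i j := by
    have hS0 : 0 ≤ ∑ k, |d k| ^ p :=
      Finset.sum_nonneg fun k _ => Real.rpow_nonneg (abs_nonneg _) p
    unfold lpNorm
    rw [one_div]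
    have h3 := Real.rpow_le_rpow hS0 hS (by positivity : (0:ℝ) ≤ p⁻¹)
    rwa [Real.rpow_rpow_inv (by linarith) hp0'] at h3
  have hνd : ν d ≤ 1 + ε i j := le_trans (h_le d) hlpd
  exact ⟨by linarith, hupper⟩
end
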